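/- arXiv:0709.1190 — 8 statements merged into one kernel-verified Lean document; each statement's English description precedes it below -/
import Mathlib

section
/- Let M* be the unique minimum weight perfect b-matching of G and let (y*, λ*) be an optimal dual solution. If C = (j_1, j_2, …, j_{2ℓ}, j_1) is a simple cycle of even length whose edges alternate between M* and its complement, then there exists an edge {i,j} of C with w_ij ≠ y*_i + y*_j. -/
set_option autoImplicit false

open Finset

variable {V : Type*}

/-- The degree of vertex `i` in the edge set `M`. -/
def degIn [DecidableEq V] (M : Finset (Sym2 V)) (i : V) : ℕ :=
  (M.filter (fun e => i ∈ e)).card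

/-- `M` is a perfect b-matching of `G`. -/
def IsPerfectBMatching [Fintype V] [DecidableEq V] (G : SimpleGraph V) [DecidableRel G.Adj]
    (b : V → ℕ) (M : Finset (Sym2 V)) : Prop :=
  M ⊆ G.edgeFinset ∧ ∀ i, degIn M i = b i

/-- Total weight of an edge set. -/
noncomputable def matchWeight (w : Sym2 V → ℝ) (M : Finset (Sym2 V)) : ℝ :=
  ∑ e ∈ M, w e

/-- The 0-1 incidence vector of an edge set. -/
def indic [DecidableEq V] (M : Finset (Sym2 V)) : Sym2 V → ℝ :=
  fun e => if e ∈ M then 1 else 0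

/-- Feasibility for the LP relaxation of the minimum weight perfect b-matching problem. -/
def LPFeasible [Fintype V] [DecidableEq V] (G : SimpleGraph V) [DecidableRel G.Adj]
    (b : V → ℕ) (x : Sym2 V → ℝ) : Prop :=
  (∀ e, e ∉ G.edgeFinset → x e = 0) ∧
  (∀ e ∈ G.edgeFinset, 0 ≤ x e ∧ x e ≤ 1) ∧
  (∀ i, ∑ e ∈ G.edgeFinset.filter (fun e => i ∈ e), x e = (b i : ℝ))

/-- LP objective value `∑ w_e x_e`. -/
noncomputable def LPCost [Fintype V] [DecidableEq V] (G : SimpleGraph V) [DecidableRel G.Adj]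
    (w : Sym2 V → ℝ) (x : Sym2 V → ℝ) : ℝ :=
  ∑ e ∈ G.edgeFinset, w e * x e

/-- Feasibility of the dual LP: `y i + y j ≤ w_{ij} + λ_{ij}` on edges and `λ ≥ 0`. -/
def DualFeasible [Fintype V] [DecidableEq V] (G : SimpleGraph V) [DecidableRel G.Adj]
    (w : Sym2 V → ℝ) (y : V → ℝ) (lam : Sym2 V → ℝ) : Prop :=
  (∀ i j, G.Adj i j → y i + y j ≤ w s(i, j) + lam s(i, j)) ∧
  (∀ e ∈ G.edgeFinset, 0 ≤ lam e)

/-- Dual LP objective `∑_i b_i y_i − ∑_e λ_e`. -/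
noncomputable def DualObj [Fintype V] [DecidableEq V] (G : SimpleGraph V) [DecidableRel G.Adj]
    (b : V → ℕ) (y : V → ℝ) (lam : Sym2 V → ℝ) : ℝ :=
  (∑ i, (b i : ℝ) * y i) - ∑ e ∈ G.edgeFinset, lam e

/-- An alternating walk of length `k` with respect to the edge set `M`:
consecutive vertices are adjacent, consecutive edges alternately belong to `M` and its
complement, and no edge is repeated immediately (`p t ≠ p (t+2)`). -/
def IsAltWalk [DecidableEq V] (G : SimpleGraph V) (M : Finset (Sym2 V))
    (k : ℕ) (p : ℕ → V) : Prop :=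
  (∀ t, t < k → G.Adj (p t) (p (t + 1))) ∧
  (∀ t, t + 1 < k → (s(p t, p (t + 1)) ∈ M ↔ s(p (t + 1), p (t + 2)) ∉ M)) ∧
  (∀ t, t + 1 < k → p t ≠ p (t + 2))

/-!
If every edge of the alternating cycle were tight, `w_ij = y_i + y_j`, then the weights of its
matched and of its unmatched edges would both equal `∑_{v ∈ C} y_v`. Exchanging the two halves
of the cycle keeps every vertex degree (each cycle vertex loses one matched edge and gains one
unmatched edge), so it would produce a second perfect b-matching of the same weight as `M*`,
contradicting uniqueness.
-/

-- Both sides equal `∑ k ∈ range (2 * l), f k`.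
theorem Finset.sum_range_odd_pairs_eq_even_pairs {A : Type*} [AddCommMonoid A] (f : ℕ → A)
    (l : ℕ) (h : f (2 * l) = f 0) :
    ∑ i ∈ range l, (f (2 * i + 1) + f (2 * i + 2)) =
      ∑ i ∈ range l, (f (2 * i) + f (2 * i + 1)) := by
  suffices ∑ i ∈ range l, f (2 * i + 2) = ∑ i ∈ range l, f (2 * i) by
    rw [sum_add_distrib, sum_add_distrib, this, add_comm]
  rcases l with _ | l
  · rfl
  · rw [sum_range_succ, sum_range_succ', show 2 * l + 2 = 2 * (l + 1) by ring, h]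
    rfl

section Exchange

variable [DecidableEq V]

theorem degIn_sdiff_union_add {M Cin Cout : Finset (Sym2 V)} (hin : Cin ⊆ M)
    (hout : Disjoint Cout M) (i : V) :
    degIn (M \ Cin ∪ Cout) i + degIn Cin i = degIn M i + degIn Cout i := by
  have hdisj : Disjoint (M \ Cin) Cout := (hout.mono_right sdiff_subset).symm
  have hsplit : degIn (M \ Cin) i + degIn Cin i = degIn M i := by
    rw [degIn, degIn, ← card_union_of_disjoint (disjoint_filter_filter sdiff_disjoint),
      ← filter_union, sdiff_union_of_subset hin, degIn]
  rw [← hsplit, degIn, filter_union, card_union_of_disjoint (disjoint_filter_filter hdisj)]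
  simp only [degIn]
  ring

theorem matchWeight_sdiff_union_add (w : Sym2 V → ℝ) {M Cin Cout : Finset (Sym2 V)}
    (hin : Cin ⊆ M) (hout : Disjoint Cout M) :
    matchWeight w (M \ Cin ∪ Cout) + matchWeight w Cin =
      matchWeight w M + matchWeight w Cout := by
  have hdisj : Disjoint (M \ Cin) Cout := (hout.mono_right sdiff_subset).symm
  simp only [matchWeight]
  rw [sum_union hdisj, add_right_comm, sum_sdiff hin]

theorem isPerfectBMatching_sdiff_union [Fintype V] {G : SimpleGraph V} [DecidableRel G.Adj]
    {b : V → ℕ} {M Cin Cout : Finset (Sym2 V)} (hM : IsPerfectBMatching G b M)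
    (hin : Cin ⊆ M) (hedges : Cout ⊆ G.edgeFinset) (hout : Disjoint Cout M)
    (hdeg : ∀ i, degIn Cin i = degIn Cout i) :
    IsPerfectBMatching G b (M \ Cin ∪ Cout) := by
  refine ⟨union_subset (sdiff_subset.trans hM.1) hedges, fun i => ?_⟩
  have := degIn_sdiff_union_add hin hout i
  rw [hdeg, hM.2] at this
  omega

theorem matchWeight_ne_of_unique [Fintype V] {G : SimpleGraph V} [DecidableRel G.Adj]
    {b : V → ℕ} {w : Sym2 V → ℝ} {M Cin Cout : Finset (Sym2 V)}
    (hM : IsPerfectBMatching G b M)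
    (huniq : ∀ M', IsPerfectBMatching G b M' → matchWeight w M' = matchWeight w M → M' = M)
    (hin : Cin ⊆ M) (hedges : Cout ⊆ G.edgeFinset) (hout : Disjoint Cout M)
    (hne : Cout.Nonempty) (hdeg : ∀ i, degIn Cin i = degIn Cout i) :
    matchWeight w Cin ≠ matchWeight w Cout := by
  intro hw
  obtain ⟨e, he⟩ := hne
  have hweight := matchWeight_sdiff_union_add w hin hout
  have hM' := huniq _ (isPerfectBMatching_sdiff_union hM hin hedges hout hdeg)
    (by linarith)
  exact disjoint_left.1 hout he (hM' ▸ mem_union_right _ he)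

end Exchange

section AlternatingCycle

def cycleEvenEdges [DecidableEq V] (p : ℕ → V) (l : ℕ) : Finset (Sym2 V) :=
  (range l).image fun i => s(p (2 * i), p (2 * i + 1))

def cycleOddEdges [DecidableEq V] (p : ℕ → V) (l : ℕ) : Finset (Sym2 V) :=
  (range l).image fun i => s(p (2 * i + 1), p (2 * i + 2))

variable {p : ℕ → V} {l : ℕ}

theorem injOn_cycleEvenEdges (hinj : Set.InjOn p (Set.Iio (2 * l))) :
    Set.InjOn (fun i => s(p (2 * i), p (2 * i + 1))) (range l) := by
  intro i hi j hj hij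
  simp only [coe_range, Set.mem_Iio] at hi hj
  rcases Sym2.eq_iff.1 hij with ⟨h, -⟩ | ⟨h, -⟩
  · have := hinj (Set.mem_Iio.2 (by omega)) (Set.mem_Iio.2 (by omega)) h
    omega
  · have := hinj (Set.mem_Iio.2 (by omega)) (Set.mem_Iio.2 (by omega)) h
    omega

theorem injOn_cycleOddEdges (hinj : Set.InjOn p (Set.Iio (2 * l))) (hclose : p (2 * l) = p 0) :
    Set.InjOn (fun i => s(p (2 * i + 1), p (2 * i + 2))) (range l) := by
  intro i hi j hj hij
  simp only [coe_range, Set.mem_Iio] at hi hj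
  rcases Sym2.eq_iff.1 hij with ⟨h, -⟩ | ⟨h, -⟩
  · have := hinj (Set.mem_Iio.2 (by omega)) (Set.mem_Iio.2 (by omega)) h
    omega
  · -- `p (2 * j + 2)` is either an interior vertex or, for `j = l - 1`, the base point `p 0`
    rcases lt_or_eq_of_le (show j + 1 ≤ l by omega) with hjl | rfl
    · have := hinj (Set.mem_Iio.2 (by omega)) (Set.mem_Iio.2 (by omega)) h
      omega
    · rw [show 2 * j + 2 = 2 * (j + 1) by ring, hclose] at h
      have := hinj (Set.mem_Iio.2 (by omega)) (Set.mem_Iio.2 (by omega)) h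
      omega

variable [DecidableEq V]

theorem sum_cycleEvenEdges_eq_sum_cycleOddEdges {A : Type*} [AddCommMonoid A]
    (φ : Sym2 V → A) (f : V → A)
    (hinj : Set.InjOn p (Set.Iio (2 * l))) (hclose : p (2 * l) = p 0)
    (hφ : ∀ k < 2 * l, φ s(p k, p (k + 1)) = f (p k) + f (p (k + 1))) :
    ∑ e ∈ cycleEvenEdges p l, φ e = ∑ e ∈ cycleOddEdges p l, φ e := by
  rw [cycleEvenEdges, cycleOddEdges, sum_image (injOn_cycleEvenEdges hinj),
    sum_image (injOn_cycleOddEdges hinj hclose)]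
  have heven : ∀ i ∈ range l,
      φ s(p (2 * i), p (2 * i + 1)) = f (p (2 * i)) + f (p (2 * i + 1)) :=
    fun i hi => hφ _ (by rw [mem_range] at hi; omega)
  have hodd : ∀ i ∈ range l,
      φ s(p (2 * i + 1), p (2 * i + 2)) = f (p (2 * i + 1)) + f (p (2 * i + 2)) :=
    fun i hi => hφ _ (by rw [mem_range] at hi; omega)
  rw [sum_congr rfl heven, sum_congr rfl hodd,
    sum_range_odd_pairs_eq_even_pairs (fun k => f (p k)) l (congrArg f hclose)]

theorem degIn_cycleEvenEdges_eq_degIn_cycleOddEdges (hinj : Set.InjOn p (Set.Iio (2 * l)))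
    (hclose : p (2 * l) = p 0) (hne : ∀ k < 2 * l, p k ≠ p (k + 1)) (v : V) :
    degIn (cycleEvenEdges p l) v = degIn (cycleOddEdges p l) v := by
  simp only [degIn, card_filter]
  refine sum_cycleEvenEdges_eq_sum_cycleOddEdges _ (fun u => if u = v then 1 else 0) hinj hclose
    fun k hk => ?_
  have := hne k hk
  by_cases h₁ : p k = v <;> by_cases h₂ : p (k + 1) = v <;> simp_all [eq_comm]

end AlternatingCycle

theorem stmt2_general [Fintype V] [DecidableEq V] (G : SimpleGraph V) [DecidableRel G.Adj]
    (w : Sym2 V → ℝ) (b : V → ℕ) (M : Finset (Sym2 V)) (y : V → ℝ)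
    (hM : IsPerfectBMatching G b M)
    (huniq : ∀ M', IsPerfectBMatching G b M' →
      matchWeight w M' = matchWeight w M → M' = M)
    -- a simple alternating cycle of even length `2 * l`
    (l : ℕ) (hl : 1 ≤ l) (p : ℕ → V)
    (hclose : p (2 * l) = p 0)
    (hinj : ∀ u v, u < v → v < 2 * l → p u ≠ p v)
    (hadj : ∀ k, k < 2 * l → G.Adj (p k) (p (k + 1)))
    (halt : ∀ k, k < 2 * l → (s(p k, p (k + 1)) ∈ M ↔ Even k)) :
    ∃ k, k < 2 * l ∧ w s(p k, p (k + 1)) ≠ y (p k) + y (p (k + 1)) := by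
  by_contra! htight
  have hinjOn : Set.InjOn p (Set.Iio (2 * l)) := fun u hu v hv h => by
    rcases lt_trichotomy u v with huv | rfl | hvu
    exacts [absurd h (hinj u v huv hv), rfl, absurd h.symm (hinj v u hvu hu)]
  have hin : cycleEvenEdges p l ⊆ M := by
    simp only [cycleEvenEdges, image_subset_iff, mem_range]
    exact fun i hi => (halt _ (by omega)).2 (even_two_mul i)
  have hout : Disjoint (cycleOddEdges p l) M := by
    simp only [cycleOddEdges, disjoint_left, mem_image, mem_range]
    rintro _ ⟨i, hi, rfl⟩ hmem
    exact Nat.not_even_two_mul_add_one i ((halt _ (by omega)).1 hmem)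
  have hedges : cycleOddEdges p l ⊆ G.edgeFinset := by
    simp only [cycleOddEdges, image_subset_iff, mem_range, SimpleGraph.mem_edgeFinset]
    exact fun i hi => hadj _ (by omega)
  exact matchWeight_ne_of_unique hM huniq hin hedges hout
    (image_nonempty.2 (nonempty_range_iff.2 (by omega)))
    (degIn_cycleEvenEdges_eq_degIn_cycleOddEdges hinjOn hclose fun k hk => (hadj k hk).ne)
    (sum_cycleEvenEdges_eq_sum_cycleOddEdges w y hinjOn hclose htight)

/-- if `M*` is the unique minimum weight perfect b-matching and `(y*, λ*)`
is an optimal dual solution (satisfying the modified complementary slackness conditions),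
then on every simple alternating cycle of even length `2ℓ` some edge satisfies
`w_{ij} ≠ y*_i + y*_j`. -/
theorem stmt2 [Fintype V] [DecidableEq V] (G : SimpleGraph V) [DecidableRel G.Adj]
    (w : Sym2 V → ℝ) (b : V → ℕ) (M : Finset (Sym2 V)) (y : V → ℝ) (lam : Sym2 V → ℝ)
    (hM : IsPerfectBMatching G b M)
    (hMopt : ∀ M', IsPerfectBMatching G b M' → matchWeight w M ≤ matchWeight w M')
    (huniq : ∀ M', IsPerfectBMatching G b M' →
      matchWeight w M' = matchWeight w M → M' = M)
    (hlam : ∀ e ∈ G.edgeFinset, 0 ≤ lam e)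
    (hin : ∀ i j, G.Adj i j → s(i, j) ∈ M → w s(i, j) + lam s(i, j) = y i + y j)
    (hout : ∀ i j, G.Adj i j → s(i, j) ∉ M →
      lam s(i, j) = 0 ∧ y i + y j ≤ w s(i, j))
    -- a simple alternating cycle of even length `2 * l`
    (l : ℕ) (hl : 1 ≤ l) (p : ℕ → V)
    (hclose : p (2 * l) = p 0)
    (hinj : ∀ u v, u < v → v < 2 * l → p u ≠ p v)
    (hadj : ∀ k, k < 2 * l → G.Adj (p k) (p (k + 1)))
    (halt : ∀ k, k < 2 * l → (s(p k, p (k + 1)) ∈ M ↔ Even k)) :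
    ∃ k, k < 2 * l ∧ w s(p k, p (k + 1)) ≠ y (p k) + y (p (k + 1)) :=
  stmt2_general G w b M y hM huniq l hl p hclose hinj hadj halt
end

section
/- Suppose the LP relaxation of minimum weight perfect b-matching on G has no fractional optimal solution, with unique optimal integral solution M* and optimal dual (y*, λ*). Then every alternating walk P (with respect to M*, no immediate edge repetitions) of length at least 2n contains an edge {i,j} with |w_ij − y*_i − y*_j| > 0. -/
set_option autoImplicit false

open Finset

variable {V : Type*}

/-!
Suppose every edge of the walk is tight: `w_ij = y_i + y_j`. Pigeonholing the pairs
(vertex, parity of position) over the first `2n + 1` positions gives a closed subwalk of even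
length. Counting its traversals with sign `+1` off `M*` and `-1` on `M*` yields an edge vector
whose incident sums vanish (the signs alternate and the subwalk is closed with even length),
and whose weight telescopes to `Σ ± (y_i + y_j) = 0` by tightness. A small multiple of it added
to the incidence vector of `M*` is then a different feasible LP solution of the same cost,
contradicting the absence of other optima.
-/

section Alternating

variable {R : Type*} [CommRing R]

theorem sum_range_neg_one_pow_mul_add (b : ℕ → R) (n : ℕ) :
    ∑ i ∈ range n, (-1) ^ i * (b i + b (i + 1)) = b 0 - (-1) ^ n * b n := by
  induction n with
  | zero => simp
  | succ n ih => rw [sum_range_succ, ih, pow_succ]; ring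

theorem eq_neg_one_pow_mul_of_alternating {σ : ℕ → R} {n : ℕ}
    (hσ : ∀ i, i + 1 < n → σ (i + 1) = -σ i) : ∀ i < n, σ i = (-1) ^ i * σ 0 := by
  intro i
  induction i with
  | zero => simp
  | succ i ih => intro hi; rw [hσ i hi, ih (by omega), pow_succ]; ring

theorem sum_range_alternating_mul_add_eq_zero {σ b : ℕ → R} {n : ℕ}
    (hσ : ∀ i, i + 1 < n → σ (i + 1) = -σ i) (hn : Even n) (hb : b n = b 0) :
    ∑ i ∈ range n, σ i * (b i + b (i + 1)) = 0 :=
  calc ∑ i ∈ range n, σ i * (b i + b (i + 1))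
      = σ 0 * ∑ i ∈ range n, (-1) ^ i * (b i + b (i + 1)) := by
        rw [mul_sum]
        refine sum_congr rfl fun i hi => ?_
        rw [eq_neg_one_pow_mul_of_alternating hσ i (mem_range.1 hi)]
        ring
    _ = 0 := by rw [sum_range_neg_one_pow_mul_add, hn.neg_one_pow, hb]; ring

end Alternating

theorem exists_lt_eq_even_sub [Fintype V] (p : ℕ → V) :
    ∃ s t, s < t ∧ t ≤ 2 * Fintype.card V ∧ p s = p t ∧ Even (t - s) := by
  obtain ⟨a, b, hab, heq⟩ := Fintype.exists_ne_map_eq_of_card_lt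
    (fun r : Fin (2 * Fintype.card V + 1) => (p r, decide (Even (r : ℕ)))) (by simp [mul_comm])
  simp only [Prod.mk.injEq, decide_eq_decide] at heq
  rcases lt_or_gt_of_ne (Fin.val_ne_of_ne hab) with h | h
  · exact ⟨a, b, h, by omega, heq.1, (Nat.even_sub h.le).2 heq.2.symm⟩
  · exact ⟨b, a, h, by omega, heq.1.symm, (Nat.even_sub h.le).2 heq.2⟩

section AltWalk

variable [DecidableEq V] {G : SimpleGraph V} {M : Finset (Sym2 V)} {L : ℕ} {q : ℕ → V}

theorem IsAltWalk.segment {k s : ℕ} {p : ℕ → V} (hp : IsAltWalk G M k p) (h : s + L ≤ k) :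
    IsAltWalk G M L (fun i => p (s + i)) :=
  ⟨fun i _ => hp.1 (s + i) (by omega), fun i _ => hp.2.1 (s + i) (by omega),
    fun i _ => hp.2.2 (s + i) (by omega)⟩

theorem IsAltWalk.edge_mem [Fintype V] [DecidableRel G.Adj] (hq : IsAltWalk G M L q) {i : ℕ}
    (hi : i < L) : s(q i, q (i + 1)) ∈ G.edgeFinset :=
  SimpleGraph.mem_edgeFinset.2 (hq.1 i hi)

def edgeSign (M : Finset (Sym2 V)) (e : Sym2 V) : ℝ :=
  if e ∈ M then -1 else 1

theorem IsAltWalk.edgeSign_succ (hq : IsAltWalk G M L q) {i : ℕ} (hi : i + 1 < L) :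
    edgeSign M s(q (i + 1), q (i + 1 + 1)) = -edgeSign M s(q i, q (i + 1)) := by
  have halt := hq.2.1 i hi
  by_cases h : s(q i, q (i + 1)) ∈ M
  · simp [edgeSign, h, halt.1 h]
  · simp [edgeSign, h, not_not.1 (mt halt.2 h)]

def altFlow (M : Finset (Sym2 V)) (q : ℕ → V) (L : ℕ) (e : Sym2 V) : ℝ :=
  edgeSign M e * #{i ∈ range L | s(q i, q (i + 1)) = e}

theorem sum_mul_altFlow {E : Finset (Sym2 V)} (hE : ∀ i < L, s(q i, q (i + 1)) ∈ E)
    (g : Sym2 V → ℝ) :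
    ∑ e ∈ E, g e * altFlow M q L e =
      ∑ i ∈ range L, edgeSign M s(q i, q (i + 1)) * g s(q i, q (i + 1)) := by
  have hflow : ∀ e, g e * altFlow M q L e =
      ∑ i ∈ range L, if s(q i, q (i + 1)) = e then
        edgeSign M s(q i, q (i + 1)) * g s(q i, q (i + 1)) else 0 := by
    intro e
    rw [altFlow, natCast_card_filter, mul_sum, mul_sum]
    refine sum_congr rfl fun i _ => ?_
    split_ifs with h <;> simp [h, mul_comm]
  simp_rw [hflow]
  rw [sum_comm]
  exact sum_congr rfl fun i hi => by rw [sum_ite_eq, if_pos (hE i (mem_range.1 hi))]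

theorem IsAltWalk.exists_altFlow_pos (hq : IsAltWalk G M L q) (hL : 1 < L) :
    ∃ e, 0 < altFlow M q L e := by
  obtain ⟨i, hi, hiM⟩ : ∃ i < L, s(q i, q (i + 1)) ∉ M := by
    by_cases h : s(q 0, q 1) ∈ M
    · exact ⟨1, hL, (hq.2.1 0 hL).1 h⟩
    · exact ⟨0, by omega, h⟩
  refine ⟨s(q i, q (i + 1)), ?_⟩
  rw [altFlow, edgeSign, if_neg hiM, one_mul, Nat.cast_pos, card_pos]
  exact ⟨i, by simp [hi]⟩

theorem indic_add_mul_altFlow_mem_Icc {ε : ℝ} (hε : 0 ≤ ε) (hεL : ε * L ≤ 1) (e : Sym2 V) :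
    0 ≤ indic M e + ε * altFlow M q L e ∧ indic M e + ε * altFlow M q L e ≤ 1 := by
  set c : ℝ := ((#{i ∈ range L | s(q i, q (i + 1)) = e} : ℕ) : ℝ)
  have hc : c ≤ L := Nat.cast_le.2 ((card_filter_le _ _).trans (card_range L).le)
  have hεc : 0 ≤ ε * c := mul_nonneg hε (Nat.cast_nonneg _)
  have hεc' : ε * c ≤ 1 := (mul_le_mul_of_nonneg_left hc hε).trans hεL
  by_cases he : e ∈ M <;> simp only [indic, altFlow, edgeSign, he, if_true, if_false] <;>
    constructor <;> linarith

end AltWalk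

section Perturbation

variable [Fintype V] [DecidableEq V] {G : SimpleGraph V} [DecidableRel G.Adj] {b : V → ℕ}
  {M : Finset (Sym2 V)} {L : ℕ} {q : ℕ → V}

theorem IsPerfectBMatching.LPFeasible_indic (hM : IsPerfectBMatching G b M) :
    LPFeasible G b (indic M) := by
  refine ⟨fun e he => if_neg fun hm => he (hM.1 hm), fun e _ => ?_, fun v => ?_⟩
  · unfold indic; split_ifs <;> norm_num
  · simp only [indic]
    rw [sum_boole, ← hM.2 v, degIn, filter_filter]
    congr 2
    ext e
    simp only [mem_filter]
    exact ⟨fun h => ⟨h.2.2, h.2.1⟩, fun h => ⟨hM.1 h.1, h.2, h.1⟩⟩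

theorem LPCost_indic_add_mul (w f : Sym2 V → ℝ) (ε : ℝ) :
    LPCost G w (fun e => indic M e + ε * f e) =
      LPCost G w (indic M) + ε * ∑ e ∈ G.edgeFinset, w e * f e := by
  rw [LPCost, LPCost, mul_sum, ← sum_add_distrib]
  exact sum_congr rfl fun e _ => by ring

theorem IsAltWalk.sum_incident_altFlow (hq : IsAltWalk G M L q) (hL : Even L)
    (hclosed : q L = q 0) (v : V) :
    ∑ e ∈ G.edgeFinset.filter (fun e => v ∈ e), altFlow M q L e = 0 := by
  rw [sum_filter, sum_congr rfl fun e _ => (boole_mul (v ∈ e) (altFlow M q L e)).symm,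
    sum_mul_altFlow (M := M) (q := q) fun i hi => hq.edge_mem hi]
  have hends : ∀ i < L, (if v ∈ s(q i, q (i + 1)) then (1 : ℝ) else 0) =
      (if v = q i then 1 else 0) + (if v = q (i + 1) then 1 else 0) := by
    intro i hi
    have hne := (hq.1 i hi).ne
    by_cases h₁ : v = q i <;> by_cases h₂ : v = q (i + 1) <;> simp_all
  rw [sum_congr rfl fun i hi => by rw [hends i (mem_range.1 hi)]]
  exact sum_range_alternating_mul_add_eq_zero (fun i hi => hq.edgeSign_succ hi) hL
    (by rw [hclosed])

theorem LPFeasible_indic_add_mul_altFlow (hM : IsPerfectBMatching G b M)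
    (hq : IsAltWalk G M L q) (hL : Even L) (hclosed : q L = q 0) {ε : ℝ} (hε : 0 ≤ ε)
    (hεL : ε * L ≤ 1) : LPFeasible G b (fun e => indic M e + ε * altFlow M q L e) := by
  refine ⟨fun e he => ?_, fun e _ => indic_add_mul_altFlow_mem_Icc hε hεL e, fun v => ?_⟩
  · have hcount : #{i ∈ range L | s(q i, q (i + 1)) = e} = 0 := by
      rw [card_eq_zero, filter_eq_empty_iff]
      exact fun i hi h => he (h ▸ hq.edge_mem (mem_range.1 hi))
    simp [hM.LPFeasible_indic.1 e he, altFlow, hcount]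
  · rw [sum_add_distrib, ← mul_sum, hq.sum_incident_altFlow hL hclosed, hM.LPFeasible_indic.2.2,
      mul_zero, add_zero]

theorem IsAltWalk.exists_ne_add_of_closed (hM : IsPerfectBMatching G b M) {w : Sym2 V → ℝ}
    (hnofrac : ∀ x', LPFeasible G b x' →
      LPCost G w x' = LPCost G w (indic M) → x' = indic M)
    (hq : IsAltWalk G M L q) (hL₀ : 0 < L) (hL : Even L) (hclosed : q L = q 0) (y : V → ℝ) :
    ∃ i < L, w s(q i, q (i + 1)) ≠ y (q i) + y (q (i + 1)) := by
  by_contra! htight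
  have hεL : (L : ℝ)⁻¹ * L = 1 := inv_mul_cancel₀ (by positivity)
  have hflow_cost : ∑ e ∈ G.edgeFinset, w e * altFlow M q L e = 0 := by
    rw [sum_mul_altFlow (M := M) (q := q) fun i hi => hq.edge_mem hi,
      sum_congr rfl fun i hi => by rw [htight i (mem_range.1 hi)]]
    exact sum_range_alternating_mul_add_eq_zero (fun i hi => hq.edgeSign_succ hi) hL
      (by rw [hclosed])
  have hpush := hnofrac _ (LPFeasible_indic_add_mul_altFlow hM hq hL hclosed
    (by positivity) hεL.le) (by rw [LPCost_indic_add_mul, hflow_cost, mul_zero, add_zero])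
  obtain ⟨e, he⟩ := hq.exists_altFlow_pos (by obtain ⟨m, rfl⟩ := hL; omega)
  have hpush_e := congrFun hpush e
  simp only [add_eq_left, mul_eq_zero, inv_eq_zero, Nat.cast_eq_zero] at hpush_e
  exact hpush_e.elim (by omega) he.ne'

end Perturbation

theorem stmt6_general [Fintype V] [DecidableEq V] (G : SimpleGraph V) [DecidableRel G.Adj]
    (w : Sym2 V → ℝ) (b : V → ℕ) (M : Finset (Sym2 V)) (y : V → ℝ)
    (hM : IsPerfectBMatching G b M)
    (hnofrac : ∀ x', LPFeasible G b x' →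
      LPCost G w x' = LPCost G w (indic M) → x' = indic M)
    -- an alternating walk of length `k ≥ 2n`
    (k : ℕ) (p : ℕ → V)
    (hwalk : IsAltWalk G M k p)
    (hk : 2 * Fintype.card V ≤ k) :
    ∃ t, t < k ∧ |w s(p t, p (t + 1)) - y (p t) - y (p (t + 1))| > 0 := by
  obtain ⟨s, t, hst, ht, hclosed, hL⟩ := exists_lt_eq_even_sub p
  obtain ⟨i, hi, hne⟩ :=
    (hwalk.segment (s := s) (L := t - s) (by omega)).exists_ne_add_of_closed hM hnofrac
      (by omega) hL (by rw [Nat.add_sub_cancel' hst.le, add_zero, hclosed]) y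
  refine ⟨s + i, by omega, abs_pos.2 fun h => hne ?_⟩
  linear_combination h

/-- if the LP relaxation of minimum weight perfect b-matching has no
fractional optimal solution, with unique optimal integral solution given by `M*` and
optimal dual `(y*, λ*)`, then every alternating walk of length at least `2n` contains an
edge with `|w_{ij} − y*_i − y*_j| > 0`. -/
theorem stmt6 [Fintype V] [DecidableEq V] (G : SimpleGraph V) [DecidableRel G.Adj]
    (w : Sym2 V → ℝ) (b : V → ℕ) (M : Finset (Sym2 V)) (y : V → ℝ) (lam : Sym2 V → ℝ)
    (hM : IsPerfectBMatching G b M)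
    (hopt : ∀ x', LPFeasible G b x' → LPCost G w (indic M) ≤ LPCost G w x')
    (hnofrac : ∀ x', LPFeasible G b x' →
      LPCost G w x' = LPCost G w (indic M) → x' = indic M)
    (hd : DualFeasible G w y lam)
    (hdopt : ∀ y' lam', DualFeasible G w y' lam' → DualObj G b y' lam' ≤ DualObj G b y lam)
    -- an alternating walk of length `k ≥ 2n`
    (k : ℕ) (p : ℕ → V)
    (hwalk : IsAltWalk G M k p)
    (hk : 2 * Fintype.card V ≤ k) :
    ∃ t, t < k ∧ |w s(p t, p (t + 1)) - y (p t) - y (p (t + 1))| > 0 :=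
  stmt6_general G w b M y hM hnofrac k p hwalk hk
end

section
/- Let P be an alternating walk consisting of an odd simple cycle C_1, a simple connecting path P_2, and another odd simple cycle C_2 (vertex-disjoint except along P), all with respect to the unique optimal b-matching M*, and suppose w_ij = y*_i + y*_j for all edges of C_1 ∪ P_2 ∪ C_2. Then the vector x' defined by x'_ij = x*_ij off C_1∪P_2∪C_2, x'_ij = 1 − x*_ij on P_2, and x'_ij = 1/2 on C_1 ∪ C_2, is a feasible solution of the LP relaxation with the same objective value as x*; hence the LP has a fractional optimal solution. -/
set_option autoImplicit false

open Finset

variable {V : Type*}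

/-!
Write `e_k = s(p k, p (k + 1))` and `x' = x* + δ`. Along the walk `x*` alternates, so
`1 - 2 x*(e_k) = ε (-1)^k` with `ε = ±1`, and `δ(e_k) = ε (-1)^k h_k` where `h = 1` on `P₂`
and `h = 1/2` on the cycles. At a visit of a vertex at an inner position `t` the two walk edges
contribute `(-1)^t (h_t - h_{t-1})`, which vanishes away from the junctions `a` and `c`; since
`C₁` and `C₂` are odd, the contributions at `p 0 = p a` and at `p c = p d` cancel as well. So `δ`
sums to zero at every vertex, which gives feasibility, and `∑ w δ = ∑_i y_i (∑_{e ∋ i} δ_e) = 0`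
because `w_ij = y_i + y_j` on the walk.
-/

def sumAtPosition (d : ℕ) (f : ℕ → ℝ) (t : ℕ) : ℝ :=
  (if t < d then f t else 0) + if 0 < t then f (t - 1) else 0

theorem sum_range_add_succ_mul_eq (d : ℕ) (g f : ℕ → ℝ) :
    ∑ k ∈ range d, (g k + g (k + 1)) * f k =
      ∑ t ∈ range (d + 1), g t * sumAtPosition d f t := by
  simp only [sumAtPosition, mul_add, add_mul, sum_add_distrib]
  rw [sum_range_succ, sum_range_succ' (fun t => g t * if 0 < t then f (t - 1) else 0)]
  congr 1
  · rw [if_neg (lt_irrefl d), mul_zero, add_zero]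
    exact sum_congr rfl fun k hk => by rw [if_pos (mem_range.mp hk)]
  · simp

noncomputable def dumbbellCoeff (a c k : ℕ) : ℝ := (-1) ^ k * if a ≤ k ∧ k < c then 1 else 1 / 2

-- `p[0..a]` and `p[c..d]` are the odd cycles `C₁`, `C₂`, joined by the path `p[a..c]`.
structure IsDumbbell (p : ℕ → V) (a c d : ℕ) : Prop where
  junction_le : a ≤ c
  junction_lt : c < d
  odd_left : Odd a
  odd_right : Odd (d - c)
  closed_left : p 0 = p a
  closed_right : p c = p d

def RepeatsOnlyAtJunctions (p : ℕ → V) (a c d : ℕ) : Prop :=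
  ∀ u v, u < v → v ≤ d → p u = p v →
    (u = 0 ∧ v = a) ∨ (u = c ∧ v = d) ∨ (a = c ∧ u = 0 ∧ v = d)

section dumbbellCoeff

variable {a c d t : ℕ}

theorem sumAtPosition_dumbbellCoeff_of_ne (h0 : 0 < t) (hd : t < d) (ha : t ≠ a) (hc : t ≠ c) :
    sumAtPosition d (dumbbellCoeff a c) t = 0 := by
  obtain ⟨s, rfl⟩ : ∃ s, t = s + 1 := ⟨t - 1, by omega⟩
  have : (a ≤ s + 1 ∧ s + 1 < c) ↔ (a ≤ s ∧ s < c) := by omega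
  simp only [sumAtPosition, dumbbellCoeff, if_pos hd, if_pos h0, add_tsub_cancel_right, this,
    pow_succ]
  ring

theorem sumAtPosition_dumbbellCoeff_zero (ha : 0 < a) (hd : 0 < d) :
    sumAtPosition d (dumbbellCoeff a c) 0 = 1 / 2 := by
  simp [sumAtPosition, dumbbellCoeff, hd, ha.ne']

theorem sumAtPosition_dumbbellCoeff_last (hcd : c < d) (hodd : Odd (d - c)) :
    sumAtPosition d (dumbbellCoeff a c) d = (-1) ^ c / 2 := by
  have hpow : ((-1 : ℝ)) ^ (d - 1) = (-1) ^ c := by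
    rw [show d - 1 = c + (d - c - 1) by omega, pow_add,
      (Nat.Odd.sub_odd hodd odd_one).neg_one_pow, mul_one]
  simp only [sumAtPosition, dumbbellCoeff, lt_irrefl, if_false, if_pos (by omega : 0 < d),
    if_neg (by omega : ¬(a ≤ d - 1 ∧ d - 1 < c)), hpow]
  ring

theorem sumAtPosition_dumbbellCoeff_left_of_lt (hodd : Odd a) (hac : a < c) (hcd : c < d) :
    sumAtPosition d (dumbbellCoeff a c) a = -1 / 2 := by
  have := hodd.pos
  simp only [sumAtPosition, dumbbellCoeff, if_pos (by omega : a < d), if_pos hodd.pos,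
    if_pos (⟨le_rfl, hac⟩ : a ≤ a ∧ a < c), if_neg (by omega : ¬(a ≤ a - 1 ∧ a - 1 < c)),
    hodd.neg_one_pow, (Nat.Odd.sub_odd hodd odd_one).neg_one_pow]
  norm_num

theorem sumAtPosition_dumbbellCoeff_right_of_lt (hac : a < c) (hcd : c < d) :
    sumAtPosition d (dumbbellCoeff a c) c = -(-1) ^ c / 2 := by
  obtain ⟨s, rfl⟩ : ∃ s, c = s + 1 := ⟨c - 1, by omega⟩
  simp only [sumAtPosition, dumbbellCoeff, if_pos hcd, if_pos s.succ_pos, add_tsub_cancel_right,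
    if_neg (by omega : ¬(a ≤ s + 1 ∧ s + 1 < s + 1)), if_pos (by omega : a ≤ s ∧ s < s + 1),
    pow_succ]
  ring

theorem sumAtPosition_dumbbellCoeff_left_self (hodd : Odd a) (had : a < d) :
    sumAtPosition d (dumbbellCoeff a a) a = 0 := by
  obtain ⟨s, rfl⟩ : ∃ s, a = s + 1 := ⟨a - 1, by have := hodd.pos; omega⟩
  simp only [sumAtPosition, dumbbellCoeff, if_pos had, if_pos s.succ_pos, add_tsub_cancel_right,
    lt_irrefl, and_false, if_false, if_neg (by omega : ¬(s + 1 ≤ s ∧ s < s + 1)), pow_succ]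
  ring

end dumbbellCoeff

namespace IsDumbbell

variable {p : ℕ → V} {a c d : ℕ}

theorem sum_endpoints_mul_dumbbellCoeff (hP : IsDumbbell p a c d) (φ : V → ℝ) :
    ∑ k ∈ range d, (φ (p k) + φ (p (k + 1))) * dumbbellCoeff a c k = 0 := by
  have ha := hP.odd_left.pos
  have hac := hP.junction_le
  have hcd := hP.junction_lt
  rw [sum_range_add_succ_mul_eq]
  rcases hac.eq_or_lt with rfl | hac
  · rw [← sum_subset (s₁ := {0, a, d}) (by intro t; simp; omega) fun t ht hne => by
      simp only [mem_insert, mem_singleton, not_or, mem_range] at ht hne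
      rw [sumAtPosition_dumbbellCoeff_of_ne (by omega) (by omega) hne.2.1 hne.2.1, mul_zero]]
    rw [sum_insert (by simp; omega), sum_insert (by simp; omega), sum_singleton,
      sumAtPosition_dumbbellCoeff_zero ha (by omega), sumAtPosition_dumbbellCoeff_left_self
        hP.odd_left hcd, sumAtPosition_dumbbellCoeff_last hcd hP.odd_right,
      hP.odd_left.neg_one_pow, ← hP.closed_right, ← hP.closed_left]
    ring
  · rw [← sum_subset (s₁ := {0, a, c, d}) (by intro t; simp; omega) fun t ht hne => by
      simp only [mem_insert, mem_singleton, not_or, mem_range] at ht hne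
      rw [sumAtPosition_dumbbellCoeff_of_ne (by omega) (by omega) hne.2.1 hne.2.2.1, mul_zero]]
    rw [sum_insert (by simp; omega), sum_insert (by simp; omega), sum_insert (by simp; omega),
      sum_singleton, sumAtPosition_dumbbellCoeff_zero ha (by omega),
      sumAtPosition_dumbbellCoeff_left_of_lt hP.odd_left hac hcd,
      sumAtPosition_dumbbellCoeff_right_of_lt hac hcd,
      sumAtPosition_dumbbellCoeff_last hcd hP.odd_right, ← hP.closed_right,
      ← hP.closed_left]
    ring

end IsDumbbell

section AltWalk

variable [DecidableEq V] {G : SimpleGraph V} {M : Finset (Sym2 V)} {p : ℕ → V} {a c d : ℕ}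

theorem IsAltWalk.one_sub_two_mul_indic (hw : IsAltWalk G M d p) {k : ℕ} (hk : k < d) :
    1 - 2 * indic M s(p k, p (k + 1)) = (-1) ^ k * (1 - 2 * indic M s(p 0, p 1)) := by
  induction k with
  | zero => simp
  | succ k ih =>
    have hnext := hw.2.1 k hk
    rw [pow_succ, mul_comm _ (-1 : ℝ), mul_assoc, ← ih (by omega)]
    unfold indic
    by_cases h : s(p k, p (k + 1)) ∈ M
    · norm_num [h, hnext.mp h]
    · norm_num [h, show s(p (k + 1), p (k + 2)) ∈ M by by_contra h'; exact h (hnext.mpr h')]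

theorem IsAltWalk.injOn_edge (hw : IsAltWalk G M d p) (hP : IsDumbbell p a c d)
    (hrep : RepeatsOnlyAtJunctions p a c d) :
    Set.InjOn (fun k => s(p k, p (k + 1))) (range d) := by
  obtain ⟨hadj, -, hback⟩ := hw
  have hcd := hP.junction_lt
  have hac := hP.junction_le
  have ha1 : a ≠ 1 := fun h => (hadj 0 (by omega)).ne (by rw [hP.closed_left, h])
  have key : ∀ u v, u < v → v < d → s(p u, p (u + 1)) ≠ s(p v, p (v + 1)) := by
    intro u v h hv huv
    rcases Sym2.eq_iff.mp huv with ⟨h1, h2⟩ | ⟨h1, h2⟩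
    · rcases hrep u v h hv.le h1 with ⟨hu, hv'⟩ | h | h
      · rw [hu, hv'] at h2
        rcases hrep 1 (a + 1) (by omega) (by omega) h2 with h | h | h <;> omega
      · omega
      · omega
    · rcases (Nat.succ_le_of_lt h).eq_or_lt with rfl | h'
      · exact hback u (by omega) h1
      · rcases hrep (u + 1) v h' hv.le h2 with h | h | h <;> omega
  intro u hu v hv huv
  simp only [coe_range, Set.mem_Iio] at hu hv
  rcases lt_trichotomy u v with h | h | h
  · exact absurd huv (key u v h hv)
  · exact h
  · exact absurd huv.symm (key v u h hu)

end AltWalk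

section Solution

variable [DecidableEq V]

noncomputable def dumbbellSolution (M : Finset (Sym2 V)) (p : ℕ → V) (a c d : ℕ) :
    Sym2 V → ℝ := fun e =>
  if e ∈ (range a).image (fun k => s(p k, p (k + 1))) ∪
      (Ico c d).image (fun k => s(p k, p (k + 1))) then (1 : ℝ) / 2
  else if e ∈ (Ico a c).image (fun k => s(p k, p (k + 1))) then 1 - indic M e
  else indic M e

variable {G : SimpleGraph V} {M : Finset (Sym2 V)} {p : ℕ → V} {a c d : ℕ}

theorem dumbbellSolution_nonneg_le_one (e : Sym2 V) :
    0 ≤ dumbbellSolution M p a c d e ∧ dumbbellSolution M p a c d e ≤ 1 := by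
  unfold dumbbellSolution indic
  split_ifs <;> norm_num

theorem dumbbellSolution_of_notMem (hP : IsDumbbell p a c d) {e : Sym2 V}
    (he : e ∉ (range d).image (fun k => s(p k, p (k + 1)))) :
    dumbbellSolution M p a c d e = indic M e := by
  have hsub : ∀ s ⊆ range d, e ∉ s.image (fun k => s(p k, p (k + 1))) :=
    fun s hs hmem => he (image_subset_image hs hmem)
  have hcd := hP.junction_lt
  have hac := hP.junction_le
  rw [dumbbellSolution, if_neg, if_neg (hsub _ fun k => by simp; omega)]
  rw [mem_union, not_or]
  exact ⟨hsub _ fun k => by simp; omega, hsub _ fun k => by simp⟩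

theorem dumbbellSolution_sub_indic_edge (hw : IsAltWalk G M d p) (hP : IsDumbbell p a c d)
    (hrep : RepeatsOnlyAtJunctions p a c d) {k : ℕ} (hk : k < d) :
    dumbbellSolution M p a c d s(p k, p (k + 1)) - indic M s(p k, p (k + 1)) =
      (1 - 2 * indic M s(p 0, p 1)) * dumbbellCoeff a c k := by
  have hmem : ∀ s ⊆ range d,
      s(p k, p (k + 1)) ∈ s.image (fun k => s(p k, p (k + 1))) ↔ k ∈ s := fun s hs => by
    rw [← mem_coe, coe_image, (hw.injOn_edge hP hrep).mem_image_iff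
      (by simpa using coe_subset.mpr hs) (by simpa using hk), mem_coe]
  have hcd := hP.junction_lt
  have hac := hP.junction_le
  rw [dumbbellCoeff, ← mul_assoc, mul_comm _ ((-1 : ℝ) ^ k), ← hw.one_sub_two_mul_indic hk]
  simp only [dumbbellSolution, mem_union, hmem (range a) (fun j => by simp; omega),
    hmem (Ico c d) (fun j => by simp), hmem (Ico a c) (fun j => by simp; omega),
    mem_range, mem_Ico]
  split_ifs <;> first | omega | ring

theorem sum_mul_dumbbellSolution_sub_indic [Fintype V] [DecidableRel G.Adj]
    (hw : IsAltWalk G M d p) (hP : IsDumbbell p a c d) (hrep : RepeatsOnlyAtJunctions p a c d)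
    (F : Sym2 V → ℝ) (φ : V → ℝ)
    (hF : ∀ k < d, F s(p k, p (k + 1)) = φ (p k) + φ (p (k + 1))) :
    ∑ e ∈ G.edgeFinset, F e * (dumbbellSolution M p a c d e - indic M e) = 0 := by
  rw [← sum_of_injOn _ (hw.injOn_edge hP hrep)
    (fun k hk => G.mem_edgeFinset.mpr (hw.1 k (mem_range.mp hk)))
    (fun e _ he => by
      rw [dumbbellSolution_of_notMem hP (by simpa using he), sub_self, mul_zero])
    (fun _ _ => rfl)]
  rw [← mul_zero (1 - 2 * indic M s(p 0, p 1)), ← hP.sum_endpoints_mul_dumbbellCoeff φ, mul_sum]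
  refine sum_congr rfl fun k hk => ?_
  rw [hF k (mem_range.mp hk), dumbbellSolution_sub_indic_edge hw hP hrep (mem_range.mp hk)]
  ring

end Solution

section LP

variable [Fintype V] [DecidableEq V] {G : SimpleGraph V} [DecidableRel G.Adj] {b : V → ℕ}
  {M : Finset (Sym2 V)} {p : ℕ → V} {a c d : ℕ}

theorem IsPerfectBMatching.sum_indic_incident (hM : IsPerfectBMatching G b M) (i : V) :
    ∑ e ∈ G.edgeFinset.filter (fun e => i ∈ e), indic M e = b i := by
  unfold indic
  rw [← hM.2 i, degIn, sum_boole, filter_filter]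
  congr 2
  ext e
  simp only [mem_filter]
  exact ⟨fun ⟨_, hi, hm⟩ => ⟨hm, hi⟩, fun ⟨hm, hi⟩ => ⟨hM.1 hm, hi, hm⟩⟩

theorem lpFeasible_dumbbellSolution (hM : IsPerfectBMatching G b M) (hw : IsAltWalk G M d p)
    (hP : IsDumbbell p a c d) (hrep : RepeatsOnlyAtJunctions p a c d) :
    LPFeasible G b (dumbbellSolution M p a c d) := by
  refine ⟨fun e he => ?_, fun e _ => dumbbellSolution_nonneg_le_one e, fun i => ?_⟩
  · have hwalk : e ∉ (range d).image (fun k => s(p k, p (k + 1))) := by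
      simp only [mem_image, mem_range, not_exists, not_and]
      exact fun k hk hek => he (hek ▸ G.mem_edgeFinset.mpr (hw.1 k hk))
    rw [dumbbellSolution_of_notMem hP hwalk, indic, if_neg fun h => he (hM.1 h)]
  · have hincident := sum_mul_dumbbellSolution_sub_indic hw hP hrep (G := G)
      (fun e => if i ∈ e then 1 else 0) (fun v => if v = i then 1 else 0) fun k hk => by
        have hne := (hw.1 k hk).ne
        by_cases h1 : p k = i <;> by_cases h2 : p (k + 1) = i <;>
          simp_all [Sym2.mem_iff, eq_comm]
    simp only [boole_mul, ← sum_filter] at hincident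
    rw [← hM.sum_indic_incident i, ← sub_eq_zero, ← sum_sub_distrib, hincident]

theorem lpCost_dumbbellSolution (hw : IsAltWalk G M d p) (hP : IsDumbbell p a c d)
    (hrep : RepeatsOnlyAtJunctions p a c d) {w : Sym2 V → ℝ} {y : V → ℝ}
    (heq : ∀ k, k < d → w s(p k, p (k + 1)) = y (p k) + y (p (k + 1))) :
    LPCost G w (dumbbellSolution M p a c d) = LPCost G w (indic M) := by
  rw [← sub_eq_zero, LPCost, LPCost, ← sum_sub_distrib]
  simp only [← mul_sub]
  exact sum_mul_dumbbellSolution_sub_indic hw hP hrep w y heq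

end LP

theorem dumbbellSolution_first_edge [DecidableEq V] {M : Finset (Sym2 V)} {p : ℕ → V} {a c d : ℕ}
    (ha : 0 < a) : dumbbellSolution M p a c d s(p 0, p 1) = 1 / 2 :=
  if_pos (mem_union_left _ (mem_image_of_mem _ (mem_range.mpr ha)))

theorem stmt7_general [Fintype V] [DecidableEq V] (G : SimpleGraph V) [DecidableRel G.Adj]
    (w : Sym2 V → ℝ) (b : V → ℕ) (M : Finset (Sym2 V)) (y : V → ℝ)
    (hM : IsPerfectBMatching G b M)
    -- the walk `P = C₁ ∪ P₂ ∪ C₂`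
    (p : ℕ → V) (d a c : ℕ) (hac : a ≤ c) (hcd : c < d)
    (hodd1 : Odd a) (hodd2 : Odd (d - c))
    (hC1 : p 0 = p a) (hC2 : p c = p d)
    (hwalk : IsAltWalk G M d p)
    (hinj : ∀ u v, u < v → v ≤ d → p u = p v →
      (u = 0 ∧ v = a) ∨ (u = c ∧ v = d) ∨ (a = c ∧ u = 0 ∧ v = d))
    -- all edges of the walk satisfy the dual equality
    (heq : ∀ k, k < d → w s(p k, p (k + 1)) = y (p k) + y (p (k + 1))) :
    LPFeasible G b (fun e =>
      if e ∈ ((Finset.range a).image (fun k => s(p k, p (k + 1)))) ∪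
             ((Finset.Ico c d).image (fun k => s(p k, p (k + 1)))) then 1 / 2
      else if e ∈ (Finset.Ico a c).image (fun k => s(p k, p (k + 1))) then 1 - indic M e
      else indic M e) ∧
    LPCost G w (fun e =>
      if e ∈ ((Finset.range a).image (fun k => s(p k, p (k + 1)))) ∪
             ((Finset.Ico c d).image (fun k => s(p k, p (k + 1)))) then 1 / 2
      else if e ∈ (Finset.Ico a c).image (fun k => s(p k, p (k + 1))) then 1 - indic M e
      else indic M e) = LPCost G w (indic M) ∧
    ∃ e ∈ G.edgeFinset,
      (if e ∈ ((Finset.range a).image (fun k => s(p k, p (k + 1)))) ∪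
             ((Finset.Ico c d).image (fun k => s(p k, p (k + 1)))) then (1 : ℝ) / 2
      else if e ∈ (Finset.Ico a c).image (fun k => s(p k, p (k + 1))) then 1 - indic M e
      else indic M e) = 1 / 2 := by
  have hP : IsDumbbell p a c d := ⟨hac, hcd, hodd1, hodd2, hC1, hC2⟩
  exact ⟨lpFeasible_dumbbellSolution hM hwalk hP hinj, lpCost_dumbbellSolution hwalk hP hinj heq,
    s(p 0, p 1), G.mem_edgeFinset.mpr (hwalk.1 0 (by omega)), dumbbellSolution_first_edge hodd1.pos⟩

/-- let `P` be an alternating walk consisting of an odd simple cycle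
`C₁ = p[0..a]`, a simple connecting path `P₂ = p[a..c]` and another odd simple cycle
`C₂ = p[c..d]`, vertex-disjoint except along the walk, with respect to the unique optimal
perfect b-matching `M*`, and suppose `w_{ij} = y*_i + y*_j` on all its edges.  Then the
vector `x'` (equal to `x*` off `C₁ ∪ P₂ ∪ C₂`, to `1 − x*` on `P₂`, and to `1/2` on
`C₁ ∪ C₂`) is LP feasible with the same objective value as `x*`; hence the LP has a
fractional optimal solution. -/
theorem stmt7 [Fintype V] [DecidableEq V] (G : SimpleGraph V) [DecidableRel G.Adj]
    (w : Sym2 V → ℝ) (b : V → ℕ) (M : Finset (Sym2 V)) (y : V → ℝ)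
    (hM : IsPerfectBMatching G b M)
    (hopt : ∀ x', LPFeasible G b x' → LPCost G w (indic M) ≤ LPCost G w x')
    (huniq : ∀ M', IsPerfectBMatching G b M' →
      matchWeight w M' = matchWeight w M → M' = M)
    -- the walk `P = C₁ ∪ P₂ ∪ C₂`
    (p : ℕ → V) (d a c : ℕ) (ha : 0 < a) (hac : a ≤ c) (hcd : c < d)
    (hodd1 : Odd a) (hodd2 : Odd (d - c))
    (hC1 : p 0 = p a) (hC2 : p c = p d)
    (hwalk : IsAltWalk G M d p)
    (hinj : ∀ u v, u < v → v ≤ d → p u = p v →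
      (u = 0 ∧ v = a) ∨ (u = c ∧ v = d) ∨ (a = c ∧ u = 0 ∧ v = d))
    -- all edges of the walk satisfy the dual equality
    (heq : ∀ k, k < d → w s(p k, p (k + 1)) = y (p k) + y (p (k + 1))) :
    LPFeasible G b (fun e =>
      if e ∈ ((Finset.range a).image (fun k => s(p k, p (k + 1)))) ∪
             ((Finset.Ico c d).image (fun k => s(p k, p (k + 1)))) then 1 / 2
      else if e ∈ (Finset.Ico a c).image (fun k => s(p k, p (k + 1))) then 1 - indic M e
      else indic M e) ∧
    LPCost G w (fun e =>
      if e ∈ ((Finset.range a).image (fun k => s(p k, p (k + 1)))) ∪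
             ((Finset.Ico c d).image (fun k => s(p k, p (k + 1)))) then 1 / 2
      else if e ∈ (Finset.Ico a c).image (fun k => s(p k, p (k + 1))) then 1 - indic M e
      else indic M e) = LPCost G w (indic M) ∧
    ∃ e ∈ G.edgeFinset,
      (if e ∈ ((Finset.range a).image (fun k => s(p k, p (k + 1)))) ∪
             ((Finset.Ico c d).image (fun k => s(p k, p (k + 1)))) then (1 : ℝ) / 2
      else if e ∈ (Finset.Ico a c).image (fun k => s(p k, p (k + 1))) then 1 - indic M e
      else indic M e) = 1 / 2 :=
  stmt7_general G w b M y hM p d a c hac hcd hodd1 hodd2 hC1 hC2 hwalk hinj heq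
end

section
/- Let T be the t-level computation tree of G rooted at vertex i, built by replicating the local neighborhood structure of G (the root i has children labeled by N(i); every non-leaf node s with parent labeled r has children labeled by N(s)\{r}). Then the messages m_{j→i}(t) of the synchronous min-sum BP recursion m_{i→j}(t) = w_ij − (b_i-th minimum over ℓ∈N(i)\{j} of m_{ℓ→i}(t−1)), initialized by m_{i→j}(0) = w_ij, satisfy m_{j→i}(t) = W⁺_{j→i}(t) − W⁻_{j→i}(t), where W⁺ (resp. W⁻) is the minimum weight of a perfect tree-b-matching of the branch T_{j→i}^t that contains (resp. does not contain) the root edge {i,j}. -/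
/-!
Both components of `Wbranch` at level `t + 1` minimise over the set `A` of child edges used
at `j`. Writing the cost of `A` as `∑ r, W⁻_{r→j} + ∑ r ∈ A, (W⁺_{r→j} - W⁻_{r→j})`, the minimum
over `|A| = k` is `∑ r, W⁻_{r→j}` plus the sum of the `k` smallest differences. Subtracting the
case `k = b j` from the case `k = b j - 1` leaves `w_{ij}` minus the `b j`-th smallest
difference, and by induction these differences are the incoming messages of the BP update.
-/
set_option autoImplicit false

open Finset

variable {V : Type*}

/-- The `k`-th smallest element of a finite multiset of reals (1-indexed). -/
noncomputable def kthMin (s : Multiset ℝ) (k : ℕ) : ℝ :=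
  (s.sort (· ≤ ·)).getD (k - 1) 0

/-- The synchronous min-sum BP messages for minimum weight perfect b-matching:
`bpMsg t i j` is the message `m_{i→j}(t)`, with `m_{i→j}(0) = w_{ij}` and
`m_{i→j}(t) = w_{ij} − (b_i)-th min over ℓ ∈ N(i)\{j} of m_{ℓ→i}(t−1)`. -/
noncomputable def bpMsg [Fintype V] [DecidableEq V] (G : SimpleGraph V) [DecidableRel G.Adj]
    (w : Sym2 V → ℝ) (b : V → ℕ) : ℕ → V → V → ℝ
  | 0, i, j => w s(i, j)
  | t + 1, i, j => w s(i, j) -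
      kthMin (((G.neighborFinset i).erase j).val.map (fun l => bpMsg G w b t l i)) (b i)

/-- `(Wbranch G w b t j i).1` (resp. `.2`) is the minimum weight `W⁺_{j→i}(t)`
(resp. `W⁻_{j→i}(t)`) of a perfect tree-b-matching of the branch `T_{j→i}^t` of the
computation tree that contains (resp. does not contain) the root edge `{i,j}`:
a matching of the branch is determined by the set `A ⊆ N(j)\{i}` of children edges used at
`j` (which must make the degree of `j` equal to `b j`), together with optimal extensions
`W⁺`/`W⁻` on the sub-branches. -/
noncomputable def Wbranch [Fintype V] [DecidableEq V] (G : SimpleGraph V) [DecidableRel G.Adj]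
    (w : Sym2 V → ℝ) (b : V → ℕ) : ℕ → V → V → ℝ × ℝ
  | 0, j, i => (w s(i, j), 0)
  | t + 1, j, i =>
      (w s(i, j) + sInf {x : ℝ | ∃ A : Finset V, A ⊆ (G.neighborFinset j).erase i ∧
          A.card = b j - 1 ∧
          x = (∑ r ∈ A, (Wbranch G w b t r j).1) +
              ∑ r ∈ ((G.neighborFinset j).erase i) \ A, (Wbranch G w b t r j).2},
       sInf {x : ℝ | ∃ A : Finset V, A ⊆ (G.neighborFinset j).erase i ∧
          A.card = b j ∧
          x = (∑ r ∈ A, (Wbranch G w b t r j).1) +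
              ∑ r ∈ ((G.neighborFinset j).erase i) \ A, (Wbranch G w b t r j).2})

theorem List.Sublist.getElem_le_getElem_of_pairwise {α : Type*} [Preorder α] :
    ∀ {l₁ l₂ : List α}, l₁.Sublist l₂ → l₂.Pairwise (· ≤ ·) →
      ∀ (k : ℕ) (h₁ : k < l₁.length) (h₂ : k < l₂.length), l₂[k] ≤ l₁[k]
  | _, _, .slnil, _, _, h₁, _ => absurd h₁ (Nat.not_lt_zero _)
  | _, a :: l₂, .cons _ h, hl, k, h₁, _ => by
    obtain ⟨ha, hl⟩ := List.pairwise_cons.mp hl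
    cases k with
    | zero => simpa using ha _ (h.subset (List.getElem_mem h₁))
    | succ j =>
      have hj : j + 1 < l₂.length := h₁.trans_le h.length_le
      calc (a :: l₂)[j + 1] = l₂[j] := rfl
        _ ≤ l₂[j + 1] := hl.rel_get_of_lt (a := ⟨j, j.lt_succ_self.trans hj⟩) (b := ⟨j + 1, hj⟩)
            (Nat.lt_succ_self j)
        _ ≤ _ := getElem_le_getElem_of_pairwise h hl (j + 1) h₁ hj
  | _, _, .cons_cons _ h, hl, k, h₁, h₂ => by
    cases k with
    | zero => exact le_rfl
    | succ j =>
      exact getElem_le_getElem_of_pairwise h hl.of_cons j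
        (Nat.lt_of_succ_lt_succ h₁) (Nat.lt_of_succ_lt_succ h₂)

theorem kthMin_add_one (m : Multiset ℝ) {k : ℕ} (hk : k < (m.sort (· ≤ ·)).length) :
    kthMin m (k + 1) = (m.sort (· ≤ ·))[k] := by
  rw [kthMin, Nat.add_sub_cancel, List.getD_eq_getElem _ _ hk]

theorem kthMin_le_kthMin_of_le {u m : Multiset ℝ} (h : u ≤ m) {k : ℕ}
    (hk : k < Multiset.card u) : kthMin m (k + 1) ≤ kthMin u (k + 1) := by
  have hku : k < (u.sort (· ≤ ·)).length := by rwa [Multiset.length_sort]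
  have hkm : k < (m.sort (· ≤ ·)).length := by
    rw [Multiset.length_sort]; exact hk.trans_le (Multiset.card_le_card h)
  have hsub : (u.sort (· ≤ ·)).Sublist (m.sort (· ≤ ·)) := by
    have hle : ((u.sort (· ≤ ·) : List ℝ) : Multiset ℝ) ≤ m.sort (· ≤ ·) := by
      rwa [Multiset.sort_eq, Multiset.sort_eq]
    obtain ⟨l, hperm, hl⟩ := Multiset.coe_le.mp hle
    rwa [hperm.eq_of_pairwise' ((Multiset.pairwise_sort _ _).sublist hl)
      (Multiset.pairwise_sort _ _)] at hl
  rw [kthMin_add_one m hkm, kthMin_add_one u hku]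
  exact hsub.getElem_le_getElem_of_pairwise (Multiset.pairwise_sort _ _) k hku hkm

theorem sum_take_sort_eq_sum_kthMin (m : Multiset ℝ) {k : ℕ} (hk : k ≤ Multiset.card m) :
    ((m.sort (· ≤ ·)).take k).sum = ∑ i ∈ range k, kthMin m (i + 1) := by
  induction k with
  | zero => simp
  | succ k ih =>
    have hk' : k < (m.sort (· ≤ ·)).length := by rw [Multiset.length_sort]; omega
    rw [List.sum_take_succ _ _ hk', sum_range_succ, ih (by omega), kthMin_add_one m hk']

theorem sum_take_sort_le_sum_of_le {u m : Multiset ℝ} (h : u ≤ m) :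
    ((m.sort (· ≤ ·)).take (Multiset.card u)).sum ≤ u.sum := by
  have hu : u.sum = ((u.sort (· ≤ ·)).take (Multiset.card u)).sum := by
    rw [← Multiset.length_sort (· ≤ ·) (s := u), List.take_length,
      ← Multiset.sum_coe, Multiset.sort_eq]
  rw [hu, sum_take_sort_eq_sum_kthMin m (Multiset.card_le_card h),
    sum_take_sort_eq_sum_kthMin u le_rfl]
  exact sum_le_sum fun i hi => kthMin_le_kthMin_of_le h (mem_range.mp hi)

theorem Finset.exists_subset_card_eq_sum_eq_sum_take_sort {α : Type*} [DecidableEq V]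
    [LinearOrder α] [AddCommMonoid α] (s : Finset V) (d : V → α) {k : ℕ} (hk : k ≤ s.card) :
    ∃ A ⊆ s, A.card = k ∧ ∑ r ∈ A, d r = (((s.val.map d).sort (· ≤ ·)).take k).sum := by
  set l := s.toList.mergeSort fun a b => decide (d a ≤ d b)
  have hperm : l.Perm s.toList := List.mergeSort_perm _ _
  have hnodup : (l.take k).Nodup :=
    (hperm.nodup_iff.mpr s.nodup_toList).sublist (List.take_sublist _ _)
  have hsort : l.map d = (s.val.map d).sort (· ≤ ·) := by
    rw [← s.coe_toList, Multiset.map_coe, Multiset.coe_sort]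
    exact List.map_mergeSort fun _ _ _ _ => rfl
  refine ⟨(l.take k).toFinset, fun a ha => ?_, ?_, ?_⟩
  · exact mem_toList.mp (hperm.subset (List.mem_of_mem_take (List.mem_toFinset.mp ha)))
  · rw [List.toFinset_card_of_nodup hnodup, List.length_take, hperm.length_eq, length_toList]
    omega
  · rw [List.sum_toFinset _ hnodup, List.map_take, hsort]

theorem sInf_sum_add_sum_sdiff_eq [DecidableEq V] (s : Finset V) (F G : V → ℝ) {k : ℕ}
    (hk : k ≤ s.card) :
    sInf {x : ℝ | ∃ A : Finset V, A ⊆ s ∧ A.card = k ∧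
        x = (∑ r ∈ A, F r) + ∑ r ∈ s \ A, G r} =
      (∑ r ∈ s, G r) + ∑ i ∈ range k, kthMin (s.val.map fun r => F r - G r) (i + 1) := by
  have hsplit : ∀ A ⊆ s, (∑ r ∈ A, F r) + ∑ r ∈ s \ A, G r =
      (∑ r ∈ s, G r) + ∑ r ∈ A, (F r - G r) := fun A hA => by
    rw [sum_sub_distrib, ← sum_sdiff hA (f := G)]; ring
  rw [← sum_take_sort_eq_sum_kthMin _ (by rwa [Multiset.card_map])]
  refine IsLeast.csInf_eq ⟨?_, ?_⟩
  · obtain ⟨A, hA, hcard, hsum⟩ :=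
      s.exists_subset_card_eq_sum_eq_sum_take_sort (fun r => F r - G r) hk
    exact ⟨A, hA, hcard, by rw [hsplit A hA, hsum]⟩
  · rintro x ⟨A, hA, rfl, rfl⟩
    rw [hsplit A hA, add_le_add_iff_left, sum_eq_multiset_sum]
    simpa using sum_take_sort_le_sum_of_le (Multiset.map_le_map (f := fun r => F r - G r)
      (val_le_iff.mpr hA))

/-- on a graph with no trivial vertices (`1 ≤ b i < deg i`), the synchronous
min-sum BP messages compute the differences of branch weights of the computation tree:
`m_{j→i}(t) = W⁺_{j→i}(t) − W⁻_{j→i}(t)`. -/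
theorem stmt8 [Fintype V] [DecidableEq V] (G : SimpleGraph V) [DecidableRel G.Adj]
    (w : Sym2 V → ℝ) (b : V → ℕ)
    (hb : ∀ i, 1 ≤ b i ∧ b i < G.degree i) :
    ∀ (t : ℕ) (i j : V), G.Adj i j →
      bpMsg G w b t j i = (Wbranch G w b t j i).1 - (Wbranch G w b t j i).2 := by
  intro t
  induction t with
  | zero => intro i j _; simp [bpMsg, Wbranch, Sym2.eq_swap]
  | succ t ih =>
    intro i j hij
    set s := (G.neighborFinset j).erase i
    have hcard : s.card = G.degree j - 1 :=
      card_erase_of_mem ((G.mem_neighborFinset j i).mpr hij.symm)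
    have hmsg : s.val.map (fun l => bpMsg G w b t l j) =
        s.val.map fun l => (Wbranch G w b t l j).1 - (Wbranch G w b t l j).2 :=
      Multiset.map_congr rfl fun l hl =>
        ih j l ((G.mem_neighborFinset j l).mp (mem_of_mem_erase hl))
    obtain ⟨hbpos, hbdeg⟩ := hb j
    obtain ⟨k, hk⟩ : ∃ k, b j = k + 1 := ⟨b j - 1, by omega⟩
    rw [bpMsg, Wbranch, hmsg, sInf_sum_add_sum_sdiff_eq s _ _ (by omega),
      sInf_sum_add_sum_sdiff_eq s _ _ (by omega), hk, Nat.add_sub_cancel, sum_range_succ,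
      Sym2.eq_swap]
    ring
end

section
/- In the setting of the min-sum BP recursion on the computation tree, for a non-leaf node i_j with parent i and children j_1, …, j_ℓ ordered so that W⁺_{j_1→i_j}(t−1) ≤ … ≤ W⁺_{j_ℓ→i_j}(t−1), and writing a = b_{i_j}, the branch weights satisfy W⁺_{i_j→i}(t) = w_{i i_j} + Σ_{r=1}^{a−1} W⁺_{j_r→i_j}(t−1) + Σ_{r=a}^{ℓ} W⁻_{j_r→i_j}(t−1) and W⁻_{i_j→i}(t) = Σ_{r=1}^{a} W⁺_{j_r→i_j}(t−1) + Σ_{r=a+1}^{ℓ} W⁻_{j_r→i_j}(t−1); consequently n_{i_j→i}(t) := W⁺ − W⁻ = w_{i i_j} − a-th-min over children of n_{j_r→i_j}(t−1). -/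
set_option autoImplicit false

open Finset

variable {V : Type*}

/-!
Both minima defining `Wbranch` at time `t + 1` minimise
`∑_{r ∈ A} W⁺_r + ∑_{r ∉ A} W⁻_r = ∑_r W⁻_r + ∑_{r ∈ A} n_r` over sets `A` of children of a
fixed size `k`, where `n = W⁺ - W⁻`. With the children sorted by `n`, the `m`-th smallest element
of any `k`-set has index at least `m`, so the first `k` children are optimal. Subtracting the
formulas for `k = b j - 1` and `k = b j`, everything cancels except `n` of the `b j`-th child.
-/

namespace Fin

variable {k l : ℕ}

theorem val_le_val_of_strictMono {f : Fin k → Fin l} (hf : StrictMono f) (i : Fin k) :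
    (i : ℕ) ≤ f i := by
  obtain ⟨i, hi⟩ := i
  induction i with
  | zero => exact Nat.zero_le _
  | succ p ih =>
    have hstep : f ⟨p, by omega⟩ < f ⟨p + 1, hi⟩ := hf (Nat.lt_succ_self p)
    exact Nat.succ_le_of_lt ((ih (by omega)).trans_lt hstep)

theorem filter_val_lt_eq_map_castLEEmb (hk : k ≤ l) :
    univ.filter (fun r : Fin l => (r : ℕ) < k) = univ.map (castLEEmb hk) := by
  ext r
  simp only [mem_filter, mem_univ, true_and, mem_map, castLEEmb_apply]
  exact ⟨fun hr => ⟨⟨r, hr⟩, rfl⟩, fun ⟨i, hi⟩ => hi ▸ i.isLt⟩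

theorem sum_filter_val_lt_le_sum_of_monotone {M : Type*} [AddCommMonoid M] [PartialOrder M]
    [IsOrderedAddMonoid M] (hk : k ≤ l) {n : Fin l → M} (hn : Monotone n)
    {B : Finset (Fin l)} (hB : B.card = k) :
    ∑ r ∈ univ.filter (fun r : Fin l => (r : ℕ) < k), n r ≤ ∑ r ∈ B, n r := by
  rw [filter_val_lt_eq_map_castLEEmb hk, ← B.map_orderEmbOfFin_univ hB, sum_map, sum_map]
  exact sum_le_sum fun i _ =>
    hn (val_le_val_of_strictMono (B.orderEmbOfFin hB).strictMono i)

theorem isLeast_sum_add_sum_compl {M : Type*} [AddCommGroup M] [LinearOrder M]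
    [IsOrderedAddMonoid M] (hk : k ≤ l) {f g : Fin l → M} (hfg : Monotone (f - g)) :
    IsLeast {x | ∃ B : Finset (Fin l), B.card = k ∧ x = ∑ r ∈ B, f r + ∑ r ∈ Bᶜ, g r}
      (∑ r ∈ univ.filter (fun r : Fin l => (r : ℕ) < k), f r +
        ∑ r ∈ univ.filter (fun r : Fin l => ¬ (r : ℕ) < k), g r) := by
  have hsplit : ∀ B : Finset (Fin l),
      ∑ r ∈ B, f r + ∑ r ∈ Bᶜ, g r = ∑ r, g r + ∑ r ∈ B, (f - g) r := by
    intro B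
    rw [Pi.sub_def, sum_sub_distrib, ← sum_compl_add_sum B g]
    abel
  refine ⟨⟨_, by rw [card_filter_val_lt, min_eq_right hk], by rw [compl_filter]⟩, ?_⟩
  rintro _ ⟨B, hB, rfl⟩
  rw [← compl_filter, hsplit, hsplit]
  exact add_le_add_right (sum_filter_val_lt_le_sum_of_monotone hk hfg hB) _

theorem sum_filter_val_lt_eq_sum_add {M : Type*} [AddCommMonoid M] (f : Fin l → M)
    (m : Fin l) {a : ℕ} (ha : (m : ℕ) + 1 = a) :
    ∑ r ∈ univ.filter (fun r : Fin l => (r : ℕ) < a), f r =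
      ∑ r ∈ univ.filter (fun r : Fin l => (r : ℕ) < m), f r + f m := by
  have hinsert : univ.filter (fun r : Fin l => (r : ℕ) < a) =
      insert m (univ.filter (fun r : Fin l => (r : ℕ) < m)) := by
    ext r
    simp only [mem_filter, mem_univ, true_and, mem_insert, Fin.ext_iff]
    omega
  rw [hinsert, sum_insert (by simp), add_comm]

theorem sum_filter_not_val_lt_eq_add_sum {M : Type*} [AddCommMonoid M] (f : Fin l → M)
    (m : Fin l) {a : ℕ} (ha : (m : ℕ) + 1 = a) :
    ∑ r ∈ univ.filter (fun r : Fin l => ¬ (r : ℕ) < m), f r =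
      f m + ∑ r ∈ univ.filter (fun r : Fin l => ¬ (r : ℕ) < a), f r := by
  have hinsert : univ.filter (fun r : Fin l => ¬ (r : ℕ) < m) =
      insert m (univ.filter (fun r : Fin l => ¬ (r : ℕ) < a)) := by
    ext r
    simp only [not_lt, mem_filter, mem_univ, true_and, mem_insert, Fin.ext_iff]
    omega
  rw [hinsert, sum_insert (by simp only [mem_filter, not_lt]; omega)]

end Fin

theorem sInf_sum_add_sum_sdiff_eq_s9 {α : Type*} [DecidableEq α] {S : Finset α} {l k : ℕ}
    {c : Fin l → α} (hcinj : Function.Injective c) (hcimg : univ.image c = S) (hk : k ≤ l)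
    {f g : α → ℝ} (hfg : Monotone fun r => f (c r) - g (c r)) :
    sInf {x : ℝ | ∃ A : Finset α, A ⊆ S ∧ A.card = k ∧
        x = ∑ r ∈ A, f r + ∑ r ∈ S \ A, g r} =
      ∑ r ∈ univ.filter (fun r : Fin l => (r : ℕ) < k), f (c r) +
        ∑ r ∈ univ.filter (fun r : Fin l => ¬ (r : ℕ) < k), g (c r) := by
  subst hcimg
  have hsum : ∀ B : Finset (Fin l),
      ∑ r ∈ B.image c, f r + ∑ r ∈ univ.image c \ B.image c, g r =
        ∑ r ∈ B, f (c r) + ∑ r ∈ Bᶜ, g (c r) := by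
    intro B
    rw [← image_sdiff _ _ hcinj, sum_image hcinj.injOn, sum_image hcinj.injOn,
      compl_eq_univ_sdiff]
  have hset : {x : ℝ | ∃ A : Finset α, A ⊆ univ.image c ∧ A.card = k ∧
      x = ∑ r ∈ A, f r + ∑ r ∈ univ.image c \ A, g r} =
      {x | ∃ B : Finset (Fin l), B.card = k ∧ x = ∑ r ∈ B, f (c r) + ∑ r ∈ Bᶜ, g (c r)} := by
    ext x
    constructor
    · rintro ⟨A, hA, hAk, rfl⟩
      obtain ⟨B, -, rfl⟩ := subset_image_iff.mp hA
      exact ⟨B, by rwa [card_image_of_injective _ hcinj] at hAk, hsum B⟩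
    · rintro ⟨B, hBk, rfl⟩
      exact ⟨B.image c, image_subset_image (subset_univ B),
        by rw [card_image_of_injective _ hcinj, hBk], (hsum B).symm⟩
  rw [hset]
  exact (Fin.isLeast_sum_add_sum_compl hk hfg).csInf_eq

/-- the BP recursion on the computation tree.  Let `i_j` be a child of `i`
with `a = b_{i_j}` and children `c 0, …, c (l-1)` (an enumeration of `N(i_j)\{i}`) ordered
so that the `W⁺` values — and the differences `n = W⁺ − W⁻` — are monotone.  Then
`W⁺_{i_j→i}(t) = w_{i i_j} + Σ_{r<a-1} W⁺_{c r→i_j}(t−1) + Σ_{r≥a-1} W⁻_{c r→i_j}(t−1)`,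
`W⁻_{i_j→i}(t) = Σ_{r<a} W⁺_{c r→i_j}(t−1) + Σ_{r≥a} W⁻_{c r→i_j}(t−1)`, and consequently
`n_{i_j→i}(t) = w_{i i_j} − (a-th minimum of the n_{c r→i_j}(t−1))`. -/
theorem stmt9 [Fintype V] [DecidableEq V] (G : SimpleGraph V) [DecidableRel G.Adj]
    (w : Sym2 V → ℝ) (b : V → ℕ) (t : ℕ) (i j : V)
    (l : ℕ) (c : Fin l → V)
    (hcinj : Function.Injective c)
    (hcimg : Finset.univ.image c = (G.neighborFinset j).erase i)
    (ha1 : 1 ≤ b j) (hal : b j ≤ l)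
    (hmono' : Monotone (fun r : Fin l =>
      (Wbranch G w b t (c r) j).1 - (Wbranch G w b t (c r) j).2)) :
    (Wbranch G w b (t + 1) j i).1 = w s(i, j) +
      (∑ r ∈ Finset.univ.filter (fun r : Fin l => (r : ℕ) < b j - 1),
        (Wbranch G w b t (c r) j).1) +
      (∑ r ∈ Finset.univ.filter (fun r : Fin l => ¬ (r : ℕ) < b j - 1),
        (Wbranch G w b t (c r) j).2) ∧
    (Wbranch G w b (t + 1) j i).2 =
      (∑ r ∈ Finset.univ.filter (fun r : Fin l => (r : ℕ) < b j),
        (Wbranch G w b t (c r) j).1) +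
      (∑ r ∈ Finset.univ.filter (fun r : Fin l => ¬ (r : ℕ) < b j),
        (Wbranch G w b t (c r) j).2) ∧
    (Wbranch G w b (t + 1) j i).1 - (Wbranch G w b (t + 1) j i).2 =
      w s(i, j) - ((Wbranch G w b t (c ⟨b j - 1, by omega⟩) j).1 -
                   (Wbranch G w b t (c ⟨b j - 1, by omega⟩) j).2) := by
  have hplus : (Wbranch G w b (t + 1) j i).1 = _ :=
    congrArg (w s(i, j) + ·) (sInf_sum_add_sum_sdiff_eq_s9 hcinj hcimg (by omega) hmono')
  have hminus : (Wbranch G w b (t + 1) j i).2 = _ :=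
    sInf_sum_add_sum_sdiff_eq_s9 hcinj hcimg hal hmono'
  refine ⟨hplus.trans (add_assoc _ _ _).symm, hminus, ?_⟩
  have hpred : b j - 1 + 1 = b j := by omega
  rw [hplus, hminus, Fin.sum_filter_val_lt_eq_sum_add _ ⟨b j - 1, by omega⟩ hpred,
    Fin.sum_filter_not_val_lt_eq_add_sum _ ⟨b j - 1, by omega⟩ hpred]
  ring
end

section
/- Let M* be the lift of the unique optimal perfect b-matching M* of G to the computation tree T_i^t, and let N* be a minimum weight perfect tree-b-matching of T_i^t. If N* and M* select different edges at the root, then there exists a path P_t of length 2t through the root of the computation tree whose edges alternately belong to N*\M* and M*\N*. -/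
/-!
Both `N` and the lift of `M` use exactly `b a` tree edges at every non-leaf node labelled `a`.
At the root their children differ, so each has a child edge the other lacks. Below an edge that
lies in only one of them, the same count at its lower endpoint forces a child edge lying in only
the other one. Following such child edges level by level, from the two differing root edges down
to the leaves, gives the two halves of the alternating path.
-/

set_option autoImplicit false

open Finset

variable {V : Type*}

/-- A node of the `t`-level computation tree `T_i^t` of `G` rooted at `i`, encoded as the
list of labels on the path from the root to the node: it starts at `i`, consecutive labels
are adjacent in `G`, it never backtracks (rule (c): children of a node exclude the parent
label), and it has at most `t+1` entries (the tree has `t+1` levels). -/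
def IsCTNode (G : SimpleGraph V) (i : V) (t : ℕ) (l : List V) : Prop :=
  l.Chain' G.Adj ∧ l.head? = some i ∧ 1 ≤ l.length ∧ l.length ≤ t + 1 ∧
  ∀ n (a c : V), l[n]? = some a → l[n + 2]? = some c → a ≠ c

/-- The edge of the computation tree joining a (non-root) node to its parent, described by
the last two labels of the node. -/
def lastEdge? : List V → Option (Sym2 V) := fun l =>
  match l.reverse with
  | a :: b :: _ => some s(b, a)
  | _ => none

/-- The weight of the parent edge of a tree node. -/
noncomputable def nodeWeight (w : Sym2 V → ℝ) (l : List V) : ℝ :=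
  ((lastEdge? l).map w).getD 0

/-- A perfect tree-b-matching of the computation tree `T_i^t`: a set `N` of tree edges
(each recorded as the lower node of the edge) such that every non-leaf node labelled `v'`
has exactly `b v'` incident selected edges (the parent edge plus the selected children
edges). -/
def IsTreeBMatching [Fintype V] [DecidableEq V] (G : SimpleGraph V) (b : V → ℕ)
    (i : V) (t : ℕ) (N : Finset (List V)) : Prop :=
  (∀ l ∈ N, IsCTNode G i t l ∧ 2 ≤ l.length) ∧
  (∀ (l : List V) (v' : V), IsCTNode G i t l → l.length ≤ t → l.getLast? = some v' →
    ((if l ∈ N then 1 else 0) +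
      (Finset.univ.filter (fun v : V => l ++ [v] ∈ N)).card) = b v')

/-- The total weight of a set of computation-tree edges. -/
noncomputable def treeWeight (w : Sym2 V → ℝ) (N : Finset (List V)) : ℝ :=
  ∑ l ∈ N, nodeWeight w l

/-- The tree edge recorded by the node `l` belongs to the lift of the edge set `M` of `G`
to the computation tree `T_i^t` (i.e. the labels of its endpoints form an edge of `M`). -/
def InLift (G : SimpleGraph V) (i : V) (t : ℕ) (M : Finset (Sym2 V)) (l : List V) : Prop :=
  IsCTNode G i t l ∧ ∃ e ∈ M, lastEdge? l = some e

/-- The node of the computation tree at depth `k` along the downward path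
`i, f 1, f 2, …`. -/
def Fpath (i : V) (f : ℕ → V) (k : ℕ) : List V :=
  i :: (List.range k).map (fun j => f (j + 1))

theorem card_filter_sym2_mk_mem [Fintype V] [DecidableEq V] (M : Finset (Sym2 V)) (a : V) :
    #(univ.filter fun v => s(a, v) ∈ M) = degIn M a := by
  refine card_bij (fun v _ => s(a, v)) (fun v hv => ?_) (fun _ _ _ _ h => Sym2.congr_right.mp h)
    (fun e he => ?_)
  · simp only [mem_filter, mem_univ, true_and] at hv
    exact mem_filter.mpr ⟨hv, Sym2.mem_mk_left a v⟩
  · obtain ⟨heM, hae⟩ := mem_filter.mp he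
    obtain ⟨v, rfl⟩ := Sym2.mem_iff_exists.mp hae
    exact ⟨v, by simpa using heM, rfl⟩

theorem exists_eq_append_pair {l : List V} (h : 2 ≤ l.length) : ∃ l' u a, l = l' ++ [u, a] := by
  obtain rfl | ⟨l₁, a, rfl⟩ := l.eq_nil_or_concat
  · simp at h
  obtain rfl | ⟨l', u, rfl⟩ := l₁.eq_nil_or_concat
  · simp at h
  exact ⟨l', u, a, by simp⟩

theorem lastEdge?_append_pair (l : List V) (u a : V) :
    lastEdge? (l ++ [u, a]) = some s(u, a) := by
  simp [lastEdge?]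

theorem two_le_length_of_lastEdge?_eq_some {l : List V} {e : Sym2 V}
    (h : lastEdge? l = some e) : 2 ≤ l.length := by
  match l, h with
  | _ :: _ :: _, _ => simp

theorem inLift_append_pair_iff {G : SimpleGraph V} {i : V} {t : ℕ} {M : Finset (Sym2 V)}
    {l : List V} {u a : V} :
    InLift G i t M (l ++ [u, a]) ↔ IsCTNode G i t (l ++ [u, a]) ∧ s(u, a) ∈ M := by
  simp [InLift, lastEdge?_append_pair]

namespace IsCTNode

variable {G : SimpleGraph V} {i : V} {t : ℕ}

theorem singleton : IsCTNode G i t [i] :=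
  ⟨List.isChain_singleton i, rfl, le_rfl, by simp, fun n _ _ _ hc => by simp at hc⟩

theorem pair {v : V} (hadj : G.Adj i v) (ht : 1 ≤ t) : IsCTNode G i t [i, v] :=
  ⟨List.isChain_pair.mpr hadj, rfl, by simp, by simpa, fun n _ _ _ hc => by simp at hc⟩

theorem ne_of_append_triple {l : List V} {u a v : V} (h : IsCTNode G i t (l ++ [u, a, v])) :
    u ≠ v :=
  h.2.2.2.2 l.length u v (by simp) (by simp)

theorem append_singleton {l : List V} {u a v : V} (h : IsCTNode G i t (l ++ [u, a]))
    (hlen : (l ++ [u, a]).length ≤ t) (hadj : G.Adj a v) (huv : u ≠ v) :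
    IsCTNode G i t (l ++ [u, a, v]) := by
  obtain ⟨hchain, hhead, -, -, hnb⟩ := h
  rw [show l ++ [u, a, v] = l ++ [u, a] ++ [v] by simp]
  refine ⟨?_, ?_, by simp, by grind, ?_⟩
  · exact List.IsChain.append hchain (List.isChain_singleton v) (by simpa using hadj)
  · simpa using hhead
  · intro n a' c ha' hc
    obtain hn | rfl | hn := lt_trichotomy n l.length
    · rw [List.getElem?_append_left (by grind)] at ha' hc
      exact hnb n a' c ha' hc
    · obtain rfl : u = a' := by simpa using ha'
      obtain rfl : v = c := by simpa using hc
      exact huv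
    · rw [List.getElem?_eq_none (by grind)] at hc
      cases hc

end IsCTNode

theorem Fpath_succ (i : V) (f : ℕ → V) (k : ℕ) :
    Fpath i f (k + 1) = Fpath i f k ++ [f (k + 1)] := by
  simp [Fpath, List.range_succ]

theorem length_Fpath (i : V) (f : ℕ → V) (k : ℕ) : (Fpath i f k).length = k + 1 := by
  simp [Fpath]

theorem exists_Fpath_of_forall_exists_child {i : V} {t : ℕ} {R : ℕ → List V → Prop}
    (hroot : ∃ v, R 0 [i, v])
    (hchild : ∀ k l, l.length ≤ t → R k l → ∃ v, R (k + 1) (l ++ [v])) :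
    ∃ f : ℕ → V, ∀ k < t, R k (Fpath i f (k + 1)) := by
  obtain ⟨v₀, hv₀⟩ := hroot
  have : Nonempty V := ⟨i⟩
  choose! next hnext using hchild
  let L : ℕ → List V := fun k => Nat.rec [i, v₀] (fun k l => l ++ [next k l]) k
  have hL : ∀ k, Fpath i (fun n => (L (n - 1)).getLastD i) (k + 1) = L k := by
    intro k
    induction k with
    | zero => rfl
    | succ k ih => rw [Fpath_succ, ih]; simp [L]
  refine ⟨fun n => (L (n - 1)).getLastD i, fun k hk => ?_⟩
  rw [hL]
  induction k with
  | zero => exact hv₀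
  | succ k ih =>
    refine hnext k (L k) ?_ (ih (by omega))
    rw [← hL, length_Fpath]
    omega

theorem exists_Fpath_alternating {i : V} {t : ℕ} {P Q : List V → Prop} (hroot : ∃ v, P [i, v])
    (hPQ : ∀ l, l.length ≤ t → P l → ∃ v, Q (l ++ [v]))
    (hQP : ∀ l, l.length ≤ t → Q l → ∃ v, P (l ++ [v])) :
    ∃ f : ℕ → V, ∀ k < t,
      (Even k → P (Fpath i f (k + 1))) ∧ (¬ Even k → Q (Fpath i f (k + 1))) := by
  let R (k : ℕ) (l : List V) : Prop := if Even k then P l else Q l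
  have hchild : ∀ k l, l.length ≤ t → R k l → ∃ v, R (k + 1) (l ++ [v]) := by
    intro k l hl hR
    by_cases hk : Even k
    · simpa [R, hk, Nat.even_add_one] using hPQ l hl (by simpa [R, hk] using hR)
    · simpa [R, hk, Nat.even_add_one] using hQP l hl (by simpa [R, hk] using hR)
  obtain ⟨f, hf⟩ := exists_Fpath_of_forall_exists_child (by simpa [R] using hroot) hchild
  exact ⟨f, fun k hk => ⟨fun he => by simpa [R, he] using hf k hk,
    fun ho => by simpa [R, ho] using hf k hk⟩⟩

section Propagation

variable [Fintype V] [DecidableEq V] {G : SimpleGraph V} [DecidableRel G.Adj] {b : V → ℕ}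
  {M : Finset (Sym2 V)} {i : V} {t : ℕ} {N : Finset (List V)}

theorem card_filter_mem_of_isPerfectBMatching (hM : IsPerfectBMatching G b M) (a : V) :
    #(univ.filter fun v => s(a, v) ∈ M) = b a :=
  (card_filter_sym2_mk_mem M a).trans (hM.2 a)

/-- The parent edge `s(u, a)` is one of the `b a` edges of `M` at `a`, so only `b a - 1` children
of the node are lifted, whereas `N`, missing the parent edge, selects `b a` children. -/
theorem exists_child_mem_not_inLift (hM : IsPerfectBMatching G b M)
    (hN : IsTreeBMatching G b i t N) {l : List V} (hlen : l.length ≤ t)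
    (hl : InLift G i t M l ∧ l ∉ N) :
    ∃ v, l ++ [v] ∈ N ∧ ¬ InLift G i t M (l ++ [v]) := by
  obtain ⟨⟨hct, e, heM, hle⟩, hlN⟩ := hl
  obtain ⟨l, u, a, rfl⟩ := exists_eq_append_pair (two_le_length_of_lastEdge?_eq_some hle)
  obtain rfl : s(u, a) = e := by simpa [lastEdge?_append_pair] using hle
  have hC := hN.2 _ a hct hlen (by simp)
  rw [if_neg hlN, zero_add] at hC
  set C := univ.filter fun v => l ++ [u, a] ++ [v] ∈ N
  set D := univ.filter fun v => s(a, v) ∈ M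
  have hu : u ∈ D := by simpa [D, Sym2.eq_swap] using heM
  have hlt : #(D.erase u) < #C := by
    rw [card_erase_of_mem hu, hC, ← card_filter_mem_of_isPerfectBMatching hM a]
    exact Nat.sub_lt (card_pos.mpr ⟨u, hu⟩) one_pos
  obtain ⟨v, hvC, hvD⟩ := exists_mem_notMem_of_card_lt_card hlt
  have hvN : l ++ [u, a, v] ∈ N := by simpa [C] using hvC
  refine ⟨v, by simpa using hvN, fun hv => hvD ?_⟩
  rw [show l ++ [u, a] ++ [v] = l ++ [u] ++ [a, v] by simp, inLift_append_pair_iff] at hv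
  have huv := IsCTNode.ne_of_append_triple (hN.1 _ hvN).1
  simpa [D, huv.symm] using hv.2

/-- Here `N` selects the parent edge and only `b a - 1` children, while all `b a` edges of `M` at
`a` lift to children, none of them the parent edge. -/
theorem exists_child_inLift_not_mem (hM : IsPerfectBMatching G b M)
    (hN : IsTreeBMatching G b i t N) {l : List V} (hlen : l.length ≤ t)
    (hl : l ∈ N ∧ ¬ InLift G i t M l) :
    ∃ v, InLift G i t M (l ++ [v]) ∧ l ++ [v] ∉ N := by
  obtain ⟨hlN, hnl⟩ := hl
  obtain ⟨hct, h2⟩ := hN.1 l hlN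
  obtain ⟨l, u, a, rfl⟩ := exists_eq_append_pair h2
  have hua : s(u, a) ∉ M := fun h => hnl (inLift_append_pair_iff.mpr ⟨hct, h⟩)
  have hC := hN.2 _ a hct hlen (by simp)
  rw [if_pos hlN] at hC
  set C := univ.filter fun v => l ++ [u, a] ++ [v] ∈ N
  set D := univ.filter fun v => s(a, v) ∈ M
  have hlt : #C < #D := by
    rw [card_filter_mem_of_isPerfectBMatching hM]
    omega
  obtain ⟨v, hvD, hvC⟩ := exists_mem_notMem_of_card_lt_card hlt
  have hvM : s(a, v) ∈ M := by simpa [D] using hvD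
  have huv : u ≠ v := by
    rintro rfl
    exact hua (Sym2.eq_swap ▸ hvM)
  have hadj : G.Adj a v := by simpa using hM.1 hvM
  refine ⟨v, ?_, by simpa [C] using hvC⟩
  rw [show l ++ [u, a] ++ [v] = l ++ [u] ++ [a, v] by simp, inLift_append_pair_iff]
  exact ⟨by simpa using hct.append_singleton hlen hadj huv, hvM⟩

theorem exists_root_children (hM : IsPerfectBMatching G b M) (hN : IsTreeBMatching G b i t N)
    (ht : 1 ≤ t) (hdiff : ∃ v, ¬ ([i, v] ∈ N ↔ s(i, v) ∈ M)) :
    (∃ v, InLift G i t M [i, v] ∧ [i, v] ∉ N) ∧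
      (∃ v, [i, v] ∈ N ∧ ¬ InLift G i t M [i, v]) := by
  have hroot : [i] ∉ N := fun h => by simpa using (hN.1 _ h).2
  have hC := hN.2 [i] i IsCTNode.singleton (by simpa) rfl
  rw [if_neg hroot, zero_add] at hC
  set C := univ.filter fun v => [i] ++ [v] ∈ N
  set D := univ.filter fun v => s(i, v) ∈ M
  have hcard : #C = #D := by rw [hC, card_filter_mem_of_isPerfectBMatching hM]
  have hCD : C ≠ D := by
    obtain ⟨v, hv⟩ := hdiff
    intro h
    apply hv
    simpa [C, D] using congrArg (v ∈ ·) h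
  have hinLift {v : V} (hv : s(i, v) ∈ M) : InLift G i t M [i, v] :=
    inLift_append_pair_iff (l := []).mpr ⟨IsCTNode.pair (by simpa using hM.1 hv) ht, hv⟩
  constructor
  · obtain ⟨v, hvD, hvC⟩ := not_subset.mp (mt (subset_iff_eq_of_card_le hcard.le).mp hCD.symm)
    exact ⟨v, hinLift (by simpa [D] using hvD), by simpa [C] using hvC⟩
  · obtain ⟨v, hvC, hvD⟩ := not_subset.mp (mt (subset_iff_eq_of_card_le hcard.ge).mp hCD)
    refine ⟨v, by simpa [C] using hvC, fun h => hvD ?_⟩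
    simpa [D] using (inLift_append_pair_iff (l := []).mp h).2

end Propagation

theorem stmt10_general [Fintype V] [DecidableEq V] (G : SimpleGraph V) [DecidableRel G.Adj]
    (b : V → ℕ) (M : Finset (Sym2 V))
    (hM : IsPerfectBMatching G b M)
    (i : V) (t : ℕ) (N : Finset (List V))
    (hN : IsTreeBMatching G b i t N)
    (hdiff : ∃ v, G.Adj i v ∧ ¬ ([i, v] ∈ N ↔ s(i, v) ∈ M)) :
    ∃ f g : ℕ → V,
      (∀ k, k < t → Even k →
        (InLift G i t M (Fpath i f (k + 1)) ∧ Fpath i f (k + 1) ∉ N) ∧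
        (Fpath i g (k + 1) ∈ N ∧ ¬ InLift G i t M (Fpath i g (k + 1)))) ∧
      (∀ k, k < t → ¬ Even k →
        (Fpath i f (k + 1) ∈ N ∧ ¬ InLift G i t M (Fpath i f (k + 1))) ∧
        (InLift G i t M (Fpath i g (k + 1)) ∧ Fpath i g (k + 1) ∉ N)) := by
  rcases Nat.eq_zero_or_pos t with rfl | ht
  · exact ⟨fun _ => i, fun _ => i, fun k hk => absurd hk k.not_lt_zero,
      fun k hk => absurd hk k.not_lt_zero⟩
  obtain ⟨hrootLift, hrootN⟩ := exists_root_children hM hN ht (hdiff.imp fun _ => And.right)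
  have hLiftN (l : List V) (hl : l.length ≤ t) := exists_child_mem_not_inLift hM hN hl
  have hNLift (l : List V) (hl : l.length ≤ t) := exists_child_inLift_not_mem hM hN hl
  obtain ⟨f, hf⟩ := exists_Fpath_alternating (P := fun l => InLift G i t M l ∧ l ∉ N)
    hrootLift hLiftN hNLift
  obtain ⟨g, hg⟩ := exists_Fpath_alternating (P := fun l => l ∈ N ∧ ¬ InLift G i t M l)
    hrootN hNLift hLiftN
  exact ⟨f, g, fun k hk he => ⟨(hf k hk).1 he, (hg k hk).1 he⟩,
    fun k hk ho => ⟨(hf k hk).2 ho, (hg k hk).2 ho⟩⟩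

/-- let `𝓜*` be the lift of the unique optimal perfect b-matching `M*` to
the computation tree `T_i^t` and let `N*` be a minimum weight perfect tree-b-matching of
`T_i^t`.  If they select different edges at the root, then there is a path of length `2t`
through the root (two downward paths given by `f` and `g`) whose edges alternately belong
to `N* \ 𝓜*` and `𝓜* \ N*`. -/
theorem stmt10 [Fintype V] [DecidableEq V] (G : SimpleGraph V) [DecidableRel G.Adj]
    (w : Sym2 V → ℝ) (b : V → ℕ) (M : Finset (Sym2 V))
    (hb : ∀ v, b v < G.degree v)
    (hM : IsPerfectBMatching G b M)
    (hMopt : ∀ M', IsPerfectBMatching G b M' → matchWeight w M ≤ matchWeight w M')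
    (huniq : ∀ M', IsPerfectBMatching G b M' →
      matchWeight w M' = matchWeight w M → M' = M)
    (i : V) (t : ℕ) (N : Finset (List V))
    (hN : IsTreeBMatching G b i t N)
    (hNopt : ∀ N', IsTreeBMatching G b i t N' → treeWeight w N ≤ treeWeight w N')
    (hdiff : ∃ v, G.Adj i v ∧ ¬ ([i, v] ∈ N ↔ s(i, v) ∈ M)) :
    ∃ f g : ℕ → V,
      (∀ k, k < t → Even k →
        (InLift G i t M (Fpath i f (k + 1)) ∧ Fpath i f (k + 1) ∉ N) ∧
        (Fpath i g (k + 1) ∈ N ∧ ¬ InLift G i t M (Fpath i g (k + 1)))) ∧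
      (∀ k, k < t → ¬ Even k →
        (Fpath i f (k + 1) ∈ N ∧ ¬ InLift G i t M (Fpath i f (k + 1))) ∧
        (InLift G i t M (Fpath i g (k + 1)) ∧ Fpath i g (k + 1) ∉ N)) :=
  stmt10_general G b M hM i t N hN hdiff
end

section
/- Suppose the LP relaxation of the (non-perfect) minimum weight b-matching problem has no fractional optimal solution, with unique optimal b-matching H* and optimal dual y* satisfying the complementary slackness conditions (including y*_i = 0 for every vertex i unsaturated by H*). Then for every alternating walk P with respect to H* whose both endpoints are H*-unsaturated vertices and whose first and last edges are not in H*, there exists an edge {i,j} ∈ P with |w_ij + y*_i + y*_j| > 0. -/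
set_option autoImplicit false

open Finset

variable {V : Type*}

/-- `H` is a (possibly non-perfect) b-matching of `G`: a set of edges of `G` in which
every vertex `i` has degree at most `b i`. -/
def IsBMatching [Fintype V] [DecidableEq V] (G : SimpleGraph V) [DecidableRel G.Adj]
    (b : V → ℕ) (H : Finset (Sym2 V)) : Prop :=
  H ⊆ G.edgeFinset ∧ ∀ i, degIn H i ≤ b i

/-- Feasibility for the LP relaxation of the (non-perfect) minimum weight b-matching
problem: `0 ≤ x_e ≤ 1` on edges, `x` vanishes off the edges, and
`∑_{j ∈ N(i)} x_{ij} ≤ b i` at every vertex. -/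
def LPFeasibleNP [Fintype V] [DecidableEq V] (G : SimpleGraph V) [DecidableRel G.Adj]
    (b : V → ℕ) (x : Sym2 V → ℝ) : Prop :=
  (∀ e, e ∉ G.edgeFinset → x e = 0) ∧
  (∀ e ∈ G.edgeFinset, 0 ≤ x e ∧ x e ≤ 1) ∧
  (∀ i, ∑ e ∈ G.edgeFinset.filter (fun e => i ∈ e), x e ≤ (b i : ℝ))

/-!
If every edge of the walk were tight, `w_ij = -(y_i + y_j)`, then pushing flow `ε` along the
walk, alternately onto the edges outside `H*` and off the edges of `H*`, would not change the
cost: the weights telescope to `-(y_{p 0} ± y_{p k}) = 0`. The walk has odd length, so the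
load changes only at its two unsaturated endpoints, and for small `ε` the perturbed vector is
still LP-feasible. It is then a second optimal solution, contradicting uniqueness.
-/

theorem Finset.sum_range_neg_one_pow_mul_add_succ {R : Type*} [CommRing R] (f : ℕ → R) (k : ℕ) :
    ∑ t ∈ range k, (-1) ^ t * (f t + f (t + 1)) = f 0 - (-1) ^ k * f k := by
  induction k with
  | zero => simp
  | succ k ih => rw [sum_range_succ, ih]; ring

section AltMult

variable [DecidableEq V] (p : ℕ → V) (k : ℕ)

/-- The signed multiplicity of `e` along the walk `p 0, …, p k`. On an alternating walk whose
first edge avoids `M` it counts the traversals of `e` positively off `M` and negatively on `M`. -/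
noncomputable def altMult (e : Sym2 V) : ℝ :=
  ∑ t ∈ range k, if s(p t, p (t + 1)) = e then (-1) ^ t else 0

variable {p k}

theorem sum_mul_altMult {S : Finset (Sym2 V)} (hS : ∀ t < k, s(p t, p (t + 1)) ∈ S)
    (g : Sym2 V → ℝ) :
    ∑ e ∈ S, g e * altMult p k e = ∑ t ∈ range k, (-1) ^ t * g s(p t, p (t + 1)) := by
  simp only [altMult, mul_sum, mul_ite, mul_zero]
  rw [sum_comm]
  refine sum_congr rfl fun t ht => ?_
  rw [sum_ite_eq S, if_pos (hS t (mem_range.1 ht)), mul_comm]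

theorem altMult_eq_zero_of_notMem {S : Finset (Sym2 V)} (hS : ∀ t < k, s(p t, p (t + 1)) ∈ S)
    {e : Sym2 V} (he : e ∉ S) : altMult p k e = 0 :=
  sum_eq_zero fun t ht => if_neg fun (h : _ = e) => he (h ▸ hS t (mem_range.1 ht))

theorem sum_incident_altMult {G : SimpleGraph V} [Fintype V] [DecidableRel G.Adj]
    (hadj : ∀ t < k, G.Adj (p t) (p (t + 1))) (i : V) :
    ∑ e ∈ G.edgeFinset.filter (fun e => i ∈ e), altMult p k e
      = (if i = p 0 then 1 else 0) - (-1) ^ k * (if i = p k then 1 else 0) := by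
  have hS : ∀ t < k, s(p t, p (t + 1)) ∈ G.edgeFinset := fun t ht =>
    SimpleGraph.mem_edgeFinset.2 (hadj t ht)
  calc ∑ e ∈ G.edgeFinset.filter (fun e => i ∈ e), altMult p k e
      = ∑ e ∈ G.edgeFinset, (if i ∈ e then 1 else 0) * altMult p k e := by
        simp only [sum_filter, ite_mul, one_mul, zero_mul]
    _ = ∑ t ∈ range k, (-1) ^ t * (if i ∈ s(p t, p (t + 1)) then 1 else 0) :=
        sum_mul_altMult hS _
    _ = ∑ t ∈ range k, (-1) ^ t *
          ((if i = p t then 1 else 0) + (if i = p (t + 1) then 1 else 0)) := by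
        refine sum_congr rfl fun t ht => ?_
        have hne : p t ≠ p (t + 1) := (hadj t (mem_range.1 ht)).ne
        by_cases h0 : i = p t <;> by_cases h1 : i = p (t + 1) <;> simp_all
    _ = _ := sum_range_neg_one_pow_mul_add_succ (fun t => if i = p t then 1 else 0) k

variable {M : Finset (Sym2 V)}

theorem IsAltWalk.mem_iff_odd {G : SimpleGraph V} (hwalk : IsAltWalk G M k p)
    (hfirst : s(p 0, p 1) ∉ M) : ∀ t < k, (s(p t, p (t + 1)) ∈ M ↔ Odd t) := by
  intro t
  induction t with
  | zero => intro _; simpa using hfirst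
  | succ t ih =>
    intro ht
    rw [Nat.odd_add_one, ← ih (by omega), hwalk.2.1 t ht]
    tauto

variable (hpar : ∀ t < k, (s(p t, p (t + 1)) ∈ M ↔ Odd t))
include hpar

theorem altMult_of_mem {e : Sym2 V} (he : e ∈ M) :
    altMult p k e = -#{t ∈ range k | s(p t, p (t + 1)) = e} := by
  rw [natCast_card_filter, ← sum_neg_distrib]
  refine sum_congr rfl fun t ht => ?_
  split_ifs with h
  · rw [((hpar t (mem_range.1 ht)).1 (h ▸ he)).neg_one_pow]
  · rw [neg_zero]

theorem altMult_of_notMem {e : Sym2 V} (he : e ∉ M) :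
    altMult p k e = #{t ∈ range k | s(p t, p (t + 1)) = e} := by
  rw [natCast_card_filter]
  refine sum_congr rfl fun t ht => ?_
  split_ifs with h
  · rw [(Nat.not_odd_iff_even.1 fun ho => he (h ▸ (hpar t (mem_range.1 ht)).2 ho)).neg_one_pow]
  · rfl

theorem altMult_pos_of_notMem {t : ℕ} (ht : t < k) (he : s(p t, p (t + 1)) ∉ M) :
    0 < altMult p k s(p t, p (t + 1)) := by
  rw [altMult_of_notMem hpar he, Nat.cast_pos, card_pos]
  exact ⟨t, mem_filter.2 ⟨mem_range.2 ht, rfl⟩⟩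

end AltMult

section LP

variable [Fintype V] [DecidableEq V] {G : SimpleGraph V} [DecidableRel G.Adj]

theorem lpCost_add (w x δ : Sym2 V → ℝ) : LPCost G w (x + δ) = LPCost G w x + LPCost G w δ := by
  simp only [LPCost, Pi.add_apply, mul_add, sum_add_distrib]

theorem lpCost_smul (w x : Sym2 V → ℝ) (c : ℝ) : LPCost G w (c • x) = c * LPCost G w x := by
  simp only [LPCost, Pi.smul_apply, smul_eq_mul, mul_sum]
  exact sum_congr rfl fun _ _ => by ring

theorem lpCost_altMult_eq_zero {p : ℕ → V} {k : ℕ} {w : Sym2 V → ℝ} {y : V → ℝ}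
    (hadj : ∀ t < k, G.Adj (p t) (p (t + 1)))
    (htight : ∀ t < k, w s(p t, p (t + 1)) + y (p t) + y (p (t + 1)) = 0)
    (h0 : y (p 0) = 0) (hk : y (p k) = 0) : LPCost G w (altMult p k) = 0 := by
  rw [LPCost, sum_mul_altMult fun t ht => SimpleGraph.mem_edgeFinset.2 (hadj t ht)]
  calc ∑ t ∈ range k, (-1) ^ t * w s(p t, p (t + 1))
      = -∑ t ∈ range k, (-1) ^ t * (y (p t) + y (p (t + 1))) := by
        rw [← sum_neg_distrib]
        refine sum_congr rfl fun t ht => ?_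
        linear_combination (-1) ^ t * htight t (mem_range.1 ht)
    _ = 0 := by rw [sum_range_neg_one_pow_mul_add_succ (fun t => y (p t)), h0, hk]; ring

theorem sum_incident_indic {H : Finset (Sym2 V)} (hH : H ⊆ G.edgeFinset) (i : V) :
    ∑ e ∈ G.edgeFinset.filter (fun e => i ∈ e), indic H e = degIn H i := by
  simp only [indic]
  rw [sum_boole, degIn, filter_filter]
  congr 2
  ext e
  simp only [mem_filter]
  exact ⟨fun h => ⟨h.2.2, h.2.1⟩, fun h => ⟨hH h.1, h.2, h.1⟩⟩

theorem lpFeasibleNP_indic_add {b : V → ℕ} {H : Finset (Sym2 V)} (hH : H ⊆ G.edgeFinset)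
    {δ : Sym2 V → ℝ} (hδ : ∀ e ∉ G.edgeFinset, δ e = 0)
    (hδin : ∀ e ∈ H, -1 ≤ δ e ∧ δ e ≤ 0) (hδout : ∀ e ∉ H, 0 ≤ δ e ∧ δ e ≤ 1)
    (hδdeg : ∀ i, degIn H i + ∑ e ∈ G.edgeFinset.filter (fun e => i ∈ e), δ e ≤ b i) :
    LPFeasibleNP G b (indic H + δ) := by
  refine ⟨fun e he => ?_, fun e _ => ?_, fun i => ?_⟩
  · simp [indic, hδ e he, show e ∉ H from fun h => he (hH h)]
  · by_cases h : e ∈ H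
    · have := hδin e h; simp only [Pi.add_apply, indic, if_pos h]; constructor <;> linarith
    · have := hδout e h; simp only [Pi.add_apply, indic, if_neg h]; constructor <;> linarith
  · rw [sum_congr rfl fun e _ => Pi.add_apply (indic H) δ e, sum_add_distrib,
      sum_incident_indic hH]
    exact hδdeg i

theorem lpFeasibleNP_indic_add_altMult {b : V → ℕ} {H : Finset (Sym2 V)} {p : ℕ → V} {k : ℕ}
    (hH : IsBMatching G b H) (hadj : ∀ t < k, G.Adj (p t) (p (t + 1)))
    (hpar : ∀ t < k, (s(p t, p (t + 1)) ∈ H ↔ Odd t)) (hkodd : Odd k)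
    (hu0 : degIn H (p 0) < b (p 0)) (huk : degIn H (p k) < b (p k)) :
    LPFeasibleNP G b (indic H + (2 * k : ℝ)⁻¹ • altMult p k) := by
  set ε := (2 * k : ℝ)⁻¹
  have hε : 0 < ε := by have := hkodd.pos; positivity
  have hεk : ε * k = 1 / 2 := by
    have : (k : ℝ) ≠ 0 := by exact_mod_cast hkodd.pos.ne'
    simp only [ε]
    field_simp
  have hcard (e : Sym2 V) :
      0 ≤ ε * #{t ∈ range k | s(p t, p (t + 1)) = e} ∧
        ε * #{t ∈ range k | s(p t, p (t + 1)) = e} ≤ 1 / 2 :=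
    ⟨by positivity, hεk ▸ mul_le_mul_of_nonneg_left
      (by exact_mod_cast (card_filter_le _ _).trans (card_range k).le) hε.le⟩
  refine lpFeasibleNP_indic_add hH.1 (fun e he => ?_) (fun e he => ?_) (fun e he => ?_)
    (fun i => ?_) <;> simp only [Pi.smul_apply, smul_eq_mul]
  · rw [altMult_eq_zero_of_notMem (fun t ht => SimpleGraph.mem_edgeFinset.2 (hadj t ht)) he,
      mul_zero]
  · rw [altMult_of_mem hpar he, mul_neg]
    constructor <;> linarith [hcard e]
  · rw [altMult_of_notMem hpar he]
    constructor <;> linarith [hcard e]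
  · rw [← mul_sum, sum_incident_altMult hadj, hkodd.neg_one_pow, neg_one_mul, sub_neg_eq_add]
    by_cases hi : i = p 0 ∨ i = p k
    · have hlt : (degIn H i : ℝ) + 1 ≤ b i := by
        exact_mod_cast hi.elim (fun h => h ▸ hu0) (fun h => h ▸ huk)
      have hle : (if i = p 0 then (1 : ℝ) else 0) + (if i = p k then 1 else 0) ≤ 2 := by
        split_ifs <;> norm_num
      have hk : (1 : ℝ) ≤ k := by exact_mod_cast hkodd.pos
      nlinarith [mul_le_mul_of_nonneg_left hle hε.le]
    · rw [not_or] at hi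
      simpa [hi.1, hi.2] using hH.2 i

end LP

theorem stmt14_general [Fintype V] [DecidableEq V] (G : SimpleGraph V) [DecidableRel G.Adj]
    (w : Sym2 V → ℝ) (b : V → ℕ) (H : Finset (Sym2 V)) (y : V → ℝ)
    (hH : IsBMatching G b H)
    (hnofrac : ∀ x', LPFeasibleNP G b x' →
      LPCost G w x' = LPCost G w (indic H) → x' = indic H)
    -- complementary slackness
    (csU : ∀ i, degIn H i < b i → y i = 0)
    -- an alternating walk with unsaturated endpoints whose end edges avoid `H*`
    (k : ℕ) (p : ℕ → V) (hk : 1 ≤ k)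
    (hwalk : IsAltWalk G H k p)
    (hu0 : degIn H (p 0) < b (p 0)) (huk : degIn H (p k) < b (p k))
    (hfirst : s(p 0, p 1) ∉ H) (hlast : s(p (k - 1), p k) ∉ H) :
    ∃ t, t < k ∧ |w s(p t, p (t + 1)) + y (p t) + y (p (t + 1))| > 0 := by
  by_contra! hcon
  have htight t (ht : t < k) : w s(p t, p (t + 1)) + y (p t) + y (p (t + 1)) = 0 :=
    abs_nonpos_iff.1 (hcon t ht)
  have hpar := hwalk.mem_iff_odd hfirst
  have hkodd : Odd k := by
    obtain ⟨j, rfl⟩ : ∃ j, k = j + 1 := ⟨k - 1, by omega⟩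
    rw [Nat.odd_add_one, ← hpar j (by omega)]
    simpa using hlast
  have hfeas := lpFeasibleNP_indic_add_altMult hH hwalk.1 hpar hkodd hu0 huk
  have hcost : LPCost G w (indic H + (2 * k : ℝ)⁻¹ • altMult p k) = LPCost G w (indic H) := by
    rw [lpCost_add, lpCost_smul,
      lpCost_altMult_eq_zero hwalk.1 htight (csU _ hu0) (csU _ huk), mul_zero, add_zero]
  have hperturb : (2 * k : ℝ)⁻¹ * altMult p k s(p 0, p 1) = 0 := by
    simpa using congrFun (hnofrac _ hfeas hcost) s(p 0, p 1)
  have hk' : (0 : ℝ) < k := by exact_mod_cast hk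
  exact (mul_pos (by positivity) (altMult_pos_of_notMem hpar hk hfirst)).ne' hperturb

/-- suppose the LP relaxation of the (non-perfect) minimum weight
b-matching problem has no fractional optimal solution, with unique optimal b-matching
`H*` and optimal dual `(y*, λ*)` satisfying the complementary slackness conditions
(including `y*_i = 0` at every `H*`-unsaturated vertex).  Then every alternating walk
whose endpoints are `H*`-unsaturated and whose first and last edges are not in `H*`
contains an edge with `|w_{ij} + y*_i + y*_j| > 0`. -/
theorem stmt14 [Fintype V] [DecidableEq V] (G : SimpleGraph V) [DecidableRel G.Adj]
    (w : Sym2 V → ℝ) (b : V → ℕ) (H : Finset (Sym2 V)) (y : V → ℝ) (lam : Sym2 V → ℝ)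
    (hw : ∀ e ∈ G.edgeFinset, w e ≤ 0)
    (hH : IsBMatching G b H)
    (hopt : ∀ x', LPFeasibleNP G b x' → LPCost G w (indic H) ≤ LPCost G w x')
    (hnofrac : ∀ x', LPFeasibleNP G b x' →
      LPCost G w x' = LPCost G w (indic H) → x' = indic H)
    -- dual feasibility
    (hdf : ∀ i j, G.Adj i j → -(y i) - y j ≤ w s(i, j) + lam s(i, j))
    (hlam : ∀ e ∈ G.edgeFinset, 0 ≤ lam e)
    (hy : ∀ i, 0 ≤ y i)
    -- complementary slackness
    (csH : ∀ i j, G.Adj i j → s(i, j) ∈ H → w s(i, j) + lam s(i, j) + y i + y j = 0)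
    (csL : ∀ i j, G.Adj i j → s(i, j) ∉ H → lam s(i, j) = 0)
    (csU : ∀ i, degIn H i < b i → y i = 0)
    -- an alternating walk with unsaturated endpoints whose end edges avoid `H*`
    (k : ℕ) (p : ℕ → V) (hk : 1 ≤ k)
    (hwalk : IsAltWalk G H k p)
    (hu0 : degIn H (p 0) < b (p 0)) (huk : degIn H (p k) < b (p k))
    (hfirst : s(p 0, p 1) ∉ H) (hlast : s(p (k - 1), p k) ∉ H) :
    ∃ t, t < k ∧ |w s(p t, p (t + 1)) + y (p t) + y (p (t + 1))| > 0 :=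
  stmt14_general G w b H y hH hnofrac csU k p hk hwalk hu0 huk hfirst hlast
end

section
/- Let P be an alternating walk (with respect to a b-matching H*) that intersects itself at most once, so that the subgraph of P decomposes as C ∪ P_1 where C is an odd simple alternating cycle and P_1 is a simple alternating path (one possibly empty), with endpoints of P_1 unsaturated by H* and adjacent edges of those endpoints not in H*. Then the vector x' defined by x' = 1 − x* on P_1, x' = 1/2 on C, and x' = x* elsewhere is a feasible solution of the non-perfect b-matching LP relaxation. -/
set_option autoImplicit false

open Finset

variable {V : Type*}

/-! `x'` differs from `x*` only on the walk edges, and these are pairwise distinct because the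
walk meets itself only in `p a = p d`. So the load `∑ x'` at a vertex changes by the sum, over
the positions `t` at which the walk visits it, of the changes on the walk edges `t - 1` and `t`.
Alternation makes these two changes cancel at every interior position of `P₁` and of `C`; at
`p 0` and `p a`, the ends of `P₁`, the change is at most `1`, which the unsaturated vertices
can absorb. -/

lemma indic_nonneg [DecidableEq V] (H : Finset (Sym2 V)) (e : Sym2 V) : 0 ≤ indic H e := by
  unfold indic; split_ifs <;> norm_num

lemma indic_le_one [DecidableEq V] (H : Finset (Sym2 V)) (e : Sym2 V) : indic H e ≤ 1 := by
  unfold indic; split_ifs <;> norm_num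

lemma sum_filter_mem_indic [Fintype V] [DecidableEq V] {G : SimpleGraph V} [DecidableRel G.Adj]
    {H : Finset (Sym2 V)} (hH : H ⊆ G.edgeFinset) (i : V) :
    ∑ e ∈ G.edgeFinset.filter (fun e => i ∈ e), indic H e = degIn H i := by
  rw [show indic H = fun e => if e ∈ H then (1 : ℝ) else 0 from rfl, sum_boole, degIn,
    filter_filter]
  congr 2
  ext e
  simp only [mem_filter]
  exact ⟨fun h => ⟨h.2.2, h.2.1⟩, fun h => ⟨hH h.1, h.2, h.1⟩⟩

lemma sum_filter_mem_eq_degIn_add [Fintype V] [DecidableEq V] {G : SimpleGraph V}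
    [DecidableRel G.Adj] {H W : Finset (Sym2 V)} (hH : H ⊆ G.edgeFinset)
    (hW : W ⊆ G.edgeFinset) {x : Sym2 V → ℝ} (hx : ∀ e ∉ W, x e = indic H e) (i : V) :
    ∑ e ∈ G.edgeFinset.filter (fun e => i ∈ e), x e =
      degIn H i + ∑ e ∈ W.filter (fun e => i ∈ e), (x e - indic H e) := by
  have hWi : W.filter (fun e => i ∈ e) ⊆ G.edgeFinset.filter (fun e => i ∈ e) :=
    filter_subset_filter _ hW
  rw [sum_subset hWi fun e he heW => by
      rw [hx e fun h => heW (mem_filter.2 ⟨h, (mem_filter.1 he).2⟩), sub_self],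
    ← sum_filter_mem_indic hH i, ← sum_add_distrib]
  exact sum_congr rfl fun e _ => by ring

def walkEdge (p : ℕ → V) (k : ℕ) : Sym2 V := s(p k, p (k + 1))

lemma walkEdge_injOn {p : ℕ → V} {d : ℕ} (hp : Set.InjOn p (Set.Iio d))
    (hnb : ∀ t, t + 1 < d → p t ≠ p (t + 2)) : Set.InjOn (walkEdge p) (Set.Iio d) := by
  suffices key : ∀ k j, k < j → j < d → walkEdge p k ≠ walkEdge p j by
    intro k hk j hj hkj
    by_contra hne
    rcases Nat.lt_or_gt_of_ne hne with h | h
    · exact key k j h hj hkj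
    · exact key j k h hk hkj.symm
  intro k j hkj hj heq
  rcases Sym2.eq_iff.mp heq with ⟨h, -⟩ | ⟨h, h'⟩
  · exact hkj.ne (hp (Set.mem_Iio.2 (hkj.trans hj)) (Set.mem_Iio.2 hj) h)
  · obtain rfl : k + 1 = j := hp (Set.mem_Iio.2 (by omega)) (Set.mem_Iio.2 hj) h'
    exact hnb k hj h

def edgeSumAt (f : ℕ → ℝ) (d t : ℕ) : ℝ :=
  (if t < d then f t else 0) + (if 0 < t then f (t - 1) else 0)

def visits [DecidableEq V] (p : ℕ → V) (d : ℕ) (i : V) : Finset ℕ :=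
  (range (d + 1)).filter (fun t => p t = i)

lemma sum_filter_mem_walkEdge [DecidableEq V] (f : ℕ → ℝ) {p : ℕ → V} {d : ℕ}
    (hne : ∀ k < d, p k ≠ p (k + 1)) (i : V) :
    ∑ k ∈ (range d).filter (fun k => i ∈ walkEdge p k), f k =
      ∑ t ∈ visits p d i, edgeSumAt f d t := by
  have hsplit : ∀ k ∈ range d, (if i ∈ walkEdge p k then f k else 0) =
      (if p k = i then f k else 0) + (if p (k + 1) = i then f k else 0) := by
    intro k hk
    have := hne k (mem_range.1 hk)
    simp only [walkEdge, Sym2.mem_iff]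
    split_ifs <;> grind
  have hvisit : ∀ t ∈ range (d + 1), (if p t = i then edgeSumAt f d t else 0) =
      (if p t = i ∧ t < d then f t else 0) + (if p t = i ∧ 0 < t then f (t - 1) else 0) := by
    intro t _
    simp only [edgeSumAt]
    split_ifs <;> grind
  rw [visits, sum_filter, sum_filter, sum_congr rfl hsplit, sum_congr rfl hvisit,
    sum_add_distrib, sum_add_distrib, sum_range_succ, sum_range_succ' _ d]
  simp only [lt_irrefl, and_false, if_false, add_zero, add_tsub_cancel_right,
    Nat.succ_pos, and_true]
  congr 1
  exact sum_congr rfl fun k hk => by simp [mem_range.1 hk]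

section Visits

variable [DecidableEq V] {p : ℕ → V} {a d : ℕ}

lemma visits_eq_singleton (hinj : ∀ u v, u < v → v ≤ d → p u = p v → u = a ∧ v = d)
    {u : ℕ} (hud : u ≤ d) (hua : u ≠ a) (hu : u ≠ d) : visits p d (p u) = {u} := by
  ext t
  simp only [visits, mem_filter, mem_range, mem_singleton]
  constructor
  · rintro ⟨ht, hpt⟩
    rcases lt_trichotomy t u with h | h | h
    · exact absurd (hinj t u h hud hpt).2 hu
    · exact h
    · exact absurd (hinj u t h (by omega) hpt.symm).1 hua
  · rintro rfl
    exact ⟨by omega, rfl⟩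

lemma visits_eq_pair (had : a ≤ d) (hC : a < d → p a = p d)
    (hinj : ∀ u v, u < v → v ≤ d → p u = p v → u = a ∧ v = d) :
    visits p d (p a) = {a, d} := by
  ext t
  simp only [visits, mem_filter, mem_range, mem_insert, mem_singleton]
  constructor
  · rintro ⟨ht, hpt⟩
    rcases lt_trichotomy t a with h | h | h
    · exact absurd (hinj t a h had hpt).1 h.ne
    · exact Or.inl h
    · exact Or.inr (hinj a t h (by omega) hpt.symm).2
  · rintro (rfl | rfl)
    · exact ⟨by omega, rfl⟩
    · rcases had.lt_or_eq with h | rfl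
      · exact ⟨by omega, (hC h).symm⟩
      · exact ⟨by omega, rfl⟩

lemma sum_visits_le (c : ℕ → ℝ) (had : a ≤ d) (hC : a < d → p a = p d)
    (hinj : ∀ u v, u < v → v ≤ d → p u = p v → u = a ∧ v = d)
    (hint : ∀ t, 0 < t → t < d → t ≠ a → c t = 0) (h0 : c 0 ≤ 1) (hd : c d ≤ 1)
    (hcyc : a < d → c a + c d ≤ 1) (i : V) :
    ∑ t ∈ visits p d i, c t ≤ if i = p 0 ∨ i = p a then 1 else 0 := by
  have hite : (0 : ℝ) ≤ if i = p 0 ∨ i = p a then 1 else 0 := by split_ifs <;> norm_num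
  by_cases hvis : ∃ u ≤ d, p u = i
  swap
  · rw [sum_eq_zero fun t ht => ?_]
    · exact hite
    · simp only [visits, mem_filter, mem_range] at ht
      exact absurd ⟨t, by omega, ht.2⟩ hvis
  obtain ⟨u, hud, rfl⟩ := hvis
  by_cases hu : u = a ∨ u = d
  · have hpu : p u = p a := by
      rcases hu with rfl | rfl
      · rfl
      · rcases had.lt_or_eq with h | rfl
        exacts [(hC h).symm, rfl]
    rw [hpu, visits_eq_pair had hC hinj, if_pos (Or.inr rfl)]
    rcases had.lt_or_eq with h | rfl
    · rw [sum_pair h.ne]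
      exact hcyc h
    · simpa using hd
  · push Not at hu
    rw [visits_eq_singleton hinj hud hu.1 hu.2, sum_singleton]
    rcases Nat.eq_zero_or_pos u with rfl | hpos
    · simpa using h0
    · rw [hint u hpos (by omega) hu.1]
      exact hite

end Visits
section AlternatingWalk

variable [DecidableEq V] {G : SimpleGraph V} {H : Finset (Sym2 V)} {p : ℕ → V} {a d : ℕ}

lemma IsAltWalk.indic_walkEdge_succ (hw : IsAltWalk G H d p) {k : ℕ} (hk : k + 1 < d) :
    indic H (walkEdge p (k + 1)) = 1 - indic H (walkEdge p k) := by
  have := hw.2.1 k hk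
  unfold indic walkEdge
  split_ifs <;> simp_all

lemma IsAltWalk.image_walkEdge_subset [Fintype V] [DecidableRel G.Adj]
    (hw : IsAltWalk G H d p) :
    (range d).image (walkEdge p) ⊆ G.edgeFinset := by
  intro e he
  obtain ⟨k, hk, rfl⟩ := mem_image.1 he
  exact SimpleGraph.mem_edgeFinset.2 (hw.1 k (mem_range.1 hk))

noncomputable def walkDev (H : Finset (Sym2 V)) (p : ℕ → V) (a k : ℕ) : ℝ :=
  if k < a then 1 - 2 * indic H (walkEdge p k) else 1 / 2 - indic H (walkEdge p k)

lemma walkDev_le_one (k : ℕ) : walkDev H p a k ≤ 1 := by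
  have := indic_nonneg H (walkEdge p k)
  unfold walkDev; split_ifs <;> linarith

lemma walkDev_le_half {k : ℕ} (hk : a ≤ k) : walkDev H p a k ≤ 1 / 2 := by
  have := indic_nonneg H (walkEdge p k)
  unfold walkDev; rw [if_neg (by omega)]; linarith

lemma IsAltWalk.walkDev_succ (hw : IsAltWalk G H d p) {k : ℕ} (hk : k + 1 < d)
    (hka : k + 1 ≠ a) : walkDev H p a (k + 1) = -walkDev H p a k := by
  unfold walkDev
  rw [hw.indic_walkEdge_succ hk]
  split_ifs <;> first | omega | ring

lemma IsAltWalk.walkDev_pred_add_le (hw : IsAltWalk G H d p) (ha : 0 < a) (had : a < d) :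
    walkDev H p a (a - 1) + walkDev H p a a ≤ 1 / 2 := by
  have hsucc := hw.indic_walkEdge_succ (k := a - 1) (by omega)
  rw [Nat.sub_add_cancel ha] at hsucc
  have := indic_nonneg H (walkEdge p (a - 1))
  unfold walkDev
  rw [if_pos (by omega), if_neg (lt_irrefl a), hsucc]
  linarith

lemma IsAltWalk.sum_visits_walkDev_le (hw : IsAltWalk G H d p) (had : a ≤ d)
    (hC : a < d → p a = p d) (hinj : ∀ u v, u < v → v ≤ d → p u = p v → u = a ∧ v = d)
    (i : V) :
    ∑ t ∈ visits p d i, edgeSumAt (walkDev H p a) d t ≤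
      if i = p 0 ∨ i = p a then 1 else 0 := by
  have hle := walkDev_le_one (H := H) (p := p) (a := a)
  refine sum_visits_le _ had hC hinj (fun t ht htd hta => ?_) ?_ ?_ (fun hlt => ?_) i
  · obtain ⟨k, rfl⟩ : ∃ k, t = k + 1 := ⟨t - 1, by omega⟩
    simp only [edgeSumAt, if_pos htd, if_pos ht, add_tsub_cancel_right]
    rw [hw.walkDev_succ htd hta, neg_add_cancel]
  · simp only [edgeSumAt, lt_irrefl, if_false, add_zero]
    split_ifs <;> simp [hle]
  · simp only [edgeSumAt, lt_irrefl, if_false, zero_add]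
    split_ifs <;> simp [hle]
  · have hdev_d : edgeSumAt (walkDev H p a) d d ≤ 1 / 2 := by
      simp only [edgeSumAt, lt_irrefl, if_false, zero_add, if_pos (show 0 < d by omega)]
      exact walkDev_le_half (by omega)
    have hdev_a : edgeSumAt (walkDev H p a) d a ≤ 1 / 2 := by
      simp only [edgeSumAt, if_pos hlt]
      rcases Nat.eq_zero_or_pos a with ha | ha
      · simp only [ha, lt_irrefl, if_false, add_zero]
        exact walkDev_le_half le_rfl
      · rw [if_pos ha, add_comm]
        exact hw.walkDev_pred_add_le ha hlt
    linarith

end AlternatingWalk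

section Augment

variable [DecidableEq V] {H : Finset (Sym2 V)} {p : ℕ → V} {a d : ℕ}

noncomputable def augment (H : Finset (Sym2 V)) (p : ℕ → V) (a d : ℕ) (e : Sym2 V) : ℝ :=
  if e ∈ (Ico a d).image (walkEdge p) then 1 / 2
  else if e ∈ (range a).image (walkEdge p) then 1 - indic H e
  else indic H e

lemma augment_nonneg (e : Sym2 V) : 0 ≤ augment H p a d e := by
  have := indic_le_one H e
  have := indic_nonneg H e
  unfold augment; split_ifs <;> linarith

lemma augment_le_one (e : Sym2 V) : augment H p a d e ≤ 1 := by
  have := indic_le_one H e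
  have := indic_nonneg H e
  unfold augment; split_ifs <;> linarith

lemma augment_of_notMem (had : a ≤ d) {e : Sym2 V} (he : e ∉ (range d).image (walkEdge p)) :
    augment H p a d e = indic H e := by
  have hIco : (Ico a d).image (walkEdge p) ⊆ (range d).image (walkEdge p) :=
    image_subset_image fun k hk => mem_range.2 (mem_Ico.1 hk).2
  have hrange : (range a).image (walkEdge p) ⊆ (range d).image (walkEdge p) :=
    image_subset_image (range_subset_range.2 had)
  rw [augment, if_neg fun h => he (hIco h), if_neg fun h => he (hrange h)]

lemma augment_walkEdge_sub_indic (heinj : Set.InjOn (walkEdge p) (Set.Iio d)) {k : ℕ}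
    (hk : k < d) :
    augment H p a d (walkEdge p k) - indic H (walkEdge p k) = walkDev H p a k := by
  unfold augment walkDev
  by_cases hka : k < a
  · have hnot : walkEdge p k ∉ (Ico a d).image (walkEdge p) := by
      intro h
      obtain ⟨j, hj, hjk⟩ := mem_image.1 h
      have := heinj (Set.mem_Iio.2 (mem_Ico.1 hj).2) (Set.mem_Iio.2 hk) hjk
      have := (mem_Ico.1 hj).1
      omega
    rw [if_neg hnot, if_pos (mem_image_of_mem _ (mem_range.2 hka)), if_pos hka]
    ring
  · rw [if_pos (mem_image_of_mem _ (mem_Ico.2 ⟨by omega, hk⟩)), if_neg hka]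

lemma sum_filter_augment_sub_indic (heinj : Set.InjOn (walkEdge p) (Set.Iio d)) (i : V) :
    ∑ e ∈ ((range d).image (walkEdge p)).filter (fun e => i ∈ e),
        (augment H p a d e - indic H e) =
      ∑ k ∈ (range d).filter (fun k => i ∈ walkEdge p k), walkDev H p a k := by
  have hlt : ∀ k ∈ (range d).filter (fun k => i ∈ walkEdge p k), k < d :=
    fun k hk => mem_range.1 (mem_filter.1 hk).1
  rw [filter_image, sum_image fun k hk j hj => heinj (hlt k hk) (hlt j hj)]
  exact sum_congr rfl fun k hk => augment_walkEdge_sub_indic heinj (hlt k hk)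

end Augment

theorem stmt15_general [Fintype V] [DecidableEq V] (G : SimpleGraph V) [DecidableRel G.Adj]
    (b : V → ℕ) (H : Finset (Sym2 V))
    (hH : IsBMatching G b H)
    (p : ℕ → V) (d a : ℕ) (had : a ≤ d)
    (hwalk : IsAltWalk G H d p)
    -- `C = p[a..d]` is a cycle of odd length (or is empty)
    (hC : a < d → p a = p d)
    -- the walk intersects itself at most once
    (hinj : ∀ u v, u < v → v ≤ d → p u = p v → u = a ∧ v = d)
    -- endpoints of `P₁` are unsaturated, and their adjacent walk edges avoid `H*`
    (hu0 : degIn H (p 0) < b (p 0)) (hua : degIn H (p a) < b (p a)) :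
    LPFeasibleNP G b (fun e =>
      if e ∈ (Finset.Ico a d).image (fun k => s(p k, p (k + 1))) then 1 / 2
      else if e ∈ (Finset.range a).image (fun k => s(p k, p (k + 1))) then 1 - indic H e
      else indic H e) := by
  obtain ⟨hHE, hdeg⟩ := hH
  have hpinj : Set.InjOn p (Set.Iio d) := fun u hu v hv huv => by
    by_contra hne
    rcases Nat.lt_or_gt_of_ne hne with h | h
    · exact (Set.mem_Iio.1 hv).ne (hinj u v h (Set.mem_Iio.1 hv).le huv).2
    · exact (Set.mem_Iio.1 hu).ne (hinj v u h (Set.mem_Iio.1 hu).le huv.symm).2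
  have heinj := walkEdge_injOn hpinj hwalk.2.2
  have hW := hwalk.image_walkEdge_subset
  have hoff : ∀ e ∉ (range d).image (walkEdge p), augment H p a d e = indic H e :=
    fun e => augment_of_notMem had
  change LPFeasibleNP G b (augment H p a d)
  refine ⟨fun e he => ?_, fun e _ => ⟨augment_nonneg e, augment_le_one e⟩, fun i => ?_⟩
  · rw [hoff e fun h => he (hW h), indic, if_neg fun h => he (hHE h)]
  · have hslack : (if i = p 0 ∨ i = p a then 1 else 0 : ℝ) ≤ b i - degIn H i := by
      have hunsat : i = p 0 ∨ i = p a → degIn H i + 1 ≤ b i := by rintro (rfl | rfl) <;> omega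
      split_ifs with hi
      · rw [le_sub_iff_add_le']; exact_mod_cast hunsat hi
      · rw [sub_nonneg]; exact_mod_cast hdeg i
    rw [sum_filter_mem_eq_degIn_add hHE hW hoff, sum_filter_augment_sub_indic heinj,
      sum_filter_mem_walkEdge _ (fun k hk => (hwalk.1 k hk).ne)]
    linarith [hwalk.sum_visits_walkDev_le had hC hinj i]

/-- let `P` be an alternating walk with respect to the b-matching `H*`
that intersects itself at most once, decomposing as a simple alternating path
`P₁ = p[0..a]` followed by an odd simple alternating cycle `C = p[a..d]` (one of the two
pieces possibly empty), with both endpoints of `P₁` unsaturated by `H*` and the edges of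
`P₁` adjacent to those endpoints not in `H*`.  Then the vector `x'` equal to `1 − x*` on
`P₁`, to `1/2` on `C`, and to `x*` elsewhere is a feasible solution of the non-perfect
b-matching LP relaxation. -/
theorem stmt15 [Fintype V] [DecidableEq V] (G : SimpleGraph V) [DecidableRel G.Adj]
    (b : V → ℕ) (H : Finset (Sym2 V))
    (hH : IsBMatching G b H)
    (p : ℕ → V) (d a : ℕ) (had : a ≤ d) (hd : 0 < d)
    (hwalk : IsAltWalk G H d p)
    -- `C = p[a..d]` is a cycle of odd length (or is empty)
    (hC : a < d → p a = p d)
    (hCodd : Odd (d - a) ∨ a = d)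
    -- the walk intersects itself at most once
    (hinj : ∀ u v, u < v → v ≤ d → p u = p v → u = a ∧ v = d)
    -- endpoints of `P₁` are unsaturated, and their adjacent walk edges avoid `H*`
    (hu0 : degIn H (p 0) < b (p 0)) (hua : degIn H (p a) < b (p a))
    (hend0 : 0 < a → s(p 0, p 1) ∉ H)
    (henda : 0 < a → s(p (a - 1), p a) ∉ H) :
    LPFeasibleNP G b (fun e =>
      if e ∈ (Finset.Ico a d).image (fun k => s(p k, p (k + 1))) then 1 / 2
      else if e ∈ (Finset.range a).image (fun k => s(p k, p (k + 1))) then 1 - indic H e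
      else indic H e) :=
  stmt15_general G b H hH p d a had hwalk hC hinj hu0 hua
end
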